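/- arXiv:2009.04188 — 7 statements merged into one kernel-verified Lean document; each statement's English description precedes it below -/
import Mathlib

section
/- Let B be a closed subset of [0,1] containing 0 and 1, and let f : B → ℝ be continuous and convex on B (meaning: for all x, y ∈ B and λ ∈ [0,1] with λx + (1−λ)y ∈ B, f(λx + (1−λ)y) ≤ λf(x) + (1−λ)f(y)). Then the affine extension L_B f is convex on [0,1]. -/
open Set
open scoped Classical

/-- Closest left neighbor of `t` in `B`. -/
noncomputable def leftN (B : Set ℝ) (t : ℝ) : ℝ := sSup {u ∈ B | u ≤ t}

/-- Closest right neighbor of `t` in `B`. -/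
noncomputable def rightN (B : Set ℝ) (t : ℝ) : ℝ := sInf {u ∈ B | t ≤ u}

/-- The affine extension `L_B g` of a function `g` defined on `B` to `[0,1]`. -/
noncomputable def affExt (B : Set ℝ) (g : ℝ → ℝ) (t : ℝ) : ℝ :=
  if t ∈ B then g t
  else (1 - (t - leftN B t) / (rightN B t - leftN B t)) * g (leftN B t)
    + (t - leftN B t) / (rightN B t - leftN B t) * g (rightN B t)

section Aux
variable {B : Set ℝ} {f : ℝ → ℝ}

lemma leftN_facts (hBsub : B ⊆ Icc (0:ℝ) 1) (hBclosed : IsClosed B) (h0 : (0:ℝ) ∈ B)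
    {t : ℝ} (ht0 : 0 ≤ t) :
    leftN B t ∈ B ∧ leftN B t ≤ t ∧ ∀ u ∈ B, u ≤ t → u ≤ leftN B t := by
  have hclosed : IsClosed {u ∈ B | u ≤ t} := hBclosed.inter isClosed_Iic
  have hcomp : IsCompact {u ∈ B | u ≤ t} :=
    isCompact_Icc.of_isClosed_subset hclosed (fun u hu => hBsub hu.1)
  have hne : {u ∈ B | u ≤ t}.Nonempty := ⟨0, h0, ht0⟩
  have hmem : leftN B t ∈ {u ∈ B | u ≤ t} := hcomp.sSup_mem hne
  exact ⟨hmem.1, hmem.2, fun u hu hut => le_csSup hcomp.bddAbove ⟨hu, hut⟩⟩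

lemma rightN_facts (hBsub : B ⊆ Icc (0:ℝ) 1) (hBclosed : IsClosed B) (h1 : (1:ℝ) ∈ B)
    {t : ℝ} (ht1 : t ≤ 1) :
    rightN B t ∈ B ∧ t ≤ rightN B t ∧ ∀ u ∈ B, t ≤ u → rightN B t ≤ u := by
  have hclosed : IsClosed {u ∈ B | t ≤ u} := hBclosed.inter isClosed_Ici
  have hcomp : IsCompact {u ∈ B | t ≤ u} :=
    isCompact_Icc.of_isClosed_subset hclosed (fun u hu => hBsub hu.1)
  have hne : {u ∈ B | t ≤ u}.Nonempty := ⟨1, h1, ht1⟩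
  have hmem : rightN B t ∈ {u ∈ B | t ≤ u} := hcomp.sInf_mem hne
  exact ⟨hmem.1, hmem.2, fun u hu hut => csInf_le hcomp.bddBelow ⟨hu, hut⟩⟩

lemma gapF (hBsub : B ⊆ Icc (0:ℝ) 1) (hBclosed : IsClosed B) (h0 : (0:ℝ) ∈ B)
    (h1 : (1:ℝ) ∈ B) {t : ℝ} (ht : t ∈ Icc (0:ℝ) 1) (htB : t ∉ B) :
    leftN B t ∈ B ∧ rightN B t ∈ B ∧ leftN B t < t ∧ t < rightN B t ∧
    (∀ u ∈ B, u ≤ t → u ≤ leftN B t) ∧ (∀ u ∈ B, t ≤ u → rightN B t ≤ u) := by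
  obtain ⟨hpB, hpt, hpub⟩ := leftN_facts hBsub hBclosed h0 ht.1
  obtain ⟨hqB, hqt, hqlb⟩ := rightN_facts hBsub hBclosed h1 ht.2
  exact ⟨hpB, hqB, lt_of_le_of_ne hpt (fun h => htB (h ▸ hpB)),
    lt_of_le_of_ne hqt (fun h => htB (h ▸ hqB)), hpub, hqlb⟩

lemma chordA_mem
    (hconv : ∀ x ∈ B, ∀ y ∈ B, ∀ l ∈ Icc (0:ℝ) 1, l * x + (1 - l) * y ∈ B →
      f (l * x + (1 - l) * y) ≤ l * f x + (1 - l) * f y)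
    {a b t : ℝ} (ha : a ∈ B) (hb : b ∈ B) (hab : a < b) (hta : a ≤ t) (htb : t ≤ b)
    (htB : t ∈ B) :
    (b - a) * f t ≤ (b - t) * f a + (t - a) * f b := by
  have hba : (0:ℝ) < b - a := by linarith
  set l := (b - t) / (b - a) with hl
  have hl0 : 0 ≤ l := div_nonneg (by linarith) hba.le
  have hl1 : l ≤ 1 := by rw [hl, div_le_one hba]; linarith
  have hpt : l * a + (1 - l) * b = t := by
    rw [hl]; field_simp; ring
  have key := hconv a ha b hb l ⟨hl0, hl1⟩ (by rw [hpt]; exact htB)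
  rw [hpt] at key
  have e1 : l * (b - a) = b - t := by rw [hl]; field_simp
  have e2 : (1 - l) * (b - a) = t - a := by rw [sub_mul, e1]; ring
  calc (b - a) * f t ≤ (b - a) * (l * f a + (1 - l) * f b) :=
        mul_le_mul_of_nonneg_left key hba.le
    _ = (l * (b - a)) * f a + ((1 - l) * (b - a)) * f b := by ring
    _ = (b - t) * f a + (t - a) * f b := by rw [e1, e2]

lemma chordA (hBsub : B ⊆ Icc (0:ℝ) 1) (hBclosed : IsClosed B) (h0 : (0:ℝ) ∈ B)
    (h1 : (1:ℝ) ∈ B)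
    (hconv : ∀ x ∈ B, ∀ y ∈ B, ∀ l ∈ Icc (0:ℝ) 1, l * x + (1 - l) * y ∈ B →
      f (l * x + (1 - l) * y) ≤ l * f x + (1 - l) * f y)
    {a b t : ℝ} (ha : a ∈ B) (hb : b ∈ B) (hab : a < b) (hta : a ≤ t) (htb : t ≤ b) :
    (b - a) * affExt B f t ≤ (b - t) * f a + (t - a) * f b := by
  by_cases htB : t ∈ B
  · rw [affExt, if_pos htB]; exact chordA_mem hconv ha hb hab hta htb htB
  · have htI : t ∈ Icc (0:ℝ) 1 := ⟨le_trans (hBsub ha).1 hta, le_trans htb (hBsub hb).2⟩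
    obtain ⟨hpB, hqB, hpt, htq, hpub, hqlb⟩ := gapF hBsub hBclosed h0 h1 htI htB
    set p := leftN B t with hp
    set q := rightN B t with hq
    have hap : a ≤ p := hpub a ha hta
    have hqb : q ≤ b := hqlb b hb htb
    have hpq : p < q := lt_trans hpt htq
    set w := (t - p) / (q - p) with hw
    have hw0 : 0 ≤ w := div_nonneg (by linarith) (by linarith)
    have hw1 : w ≤ 1 := by rw [hw, div_le_one (by linarith)]; linarith
    have hwe : w * (q - p) = t - p := by
      rw [hw]; exact div_mul_cancel₀ _ (by linarith)
    have hP : (b - a) * f p ≤ (b - p) * f a + (p - a) * f b :=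
      chordA_mem hconv ha hb hab hap (by linarith) hpB
    have hQ : (b - a) * f q ≤ (b - q) * f a + (q - a) * f b :=
      chordA_mem hconv ha hb hab (by linarith) hqb hqB
    rw [affExt, if_neg htB]
    calc (b - a) * ((1 - (t - p) / (q - p)) * f p + (t - p) / (q - p) * f q)
        = (1 - w) * ((b - a) * f p) + w * ((b - a) * f q) := by rw [← hw]; ring
      _ ≤ (1 - w) * ((b - p) * f a + (p - a) * f b)
            + w * ((b - q) * f a + (q - a) * f b) :=
          add_le_add (mul_le_mul_of_nonneg_left hP (by linarith))
            (mul_le_mul_of_nonneg_left hQ hw0)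
      _ = (b - (p + w * (q - p))) * f a + ((p + w * (q - p)) - a) * f b := by ring
      _ = (b - t) * f a + (t - a) * f b := by rw [hwe]; ring_nf

lemma transfer (hBsub : B ⊆ Icc (0:ℝ) 1) (hBclosed : IsClosed B) (h0 : (0:ℝ) ∈ B)
    (h1 : (1:ℝ) ∈ B) {m c : ℝ} (hB : ∀ u ∈ B, m * u + c ≤ f u)
    {t : ℝ} (ht : t ∈ Icc (0:ℝ) 1) : m * t + c ≤ affExt B f t := by
  by_cases htB : t ∈ B
  · rw [affExt, if_pos htB]; exact hB t htB
  · obtain ⟨hpB, hqB, hpt, htq, hpub, hqlb⟩ := gapF hBsub hBclosed h0 h1 ht htB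
    set p := leftN B t with hp
    set q := rightN B t with hq
    have hpq : p < q := lt_trans hpt htq
    set w := (t - p) / (q - p) with hw
    have hw0 : 0 ≤ w := div_nonneg (by linarith) (by linarith)
    have hw1 : w ≤ 1 := by rw [hw, div_le_one (by linarith)]; linarith
    have hwe : w * (q - p) = t - p := by
      rw [hw]; exact div_mul_cancel₀ _ (by linarith)
    rw [affExt, if_neg htB]
    have e1 : (1 - w) * (m * p + c) ≤ (1 - w) * f p :=
      mul_le_mul_of_nonneg_left (hB p hpB) (by linarith)
    have e2 : w * (m * q + c) ≤ w * f q :=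
      mul_le_mul_of_nonneg_left (hB q hqB) hw0
    have e3 : m * (w * (q - p)) = m * (t - p) := by rw [hwe]
    rw [← hw]
    nlinarith [e1, e2, e3]

lemma supp_line (hBsub : B ⊆ Icc (0:ℝ) 1) (hBclosed : IsClosed B) (h0 : (0:ℝ) ∈ B)
    (h1 : (1:ℝ) ∈ B)
    (hconv : ∀ x ∈ B, ∀ y ∈ B, ∀ l ∈ Icc (0:ℝ) 1, l * x + (1 - l) * y ∈ B →
      f (l * x + (1 - l) * y) ≤ l * f x + (1 - l) * f y)
    {y : ℝ} (hy : y ∈ Ioo (0:ℝ) 1) :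
    ∃ m c : ℝ, m * y + c = affExt B f y ∧ ∀ u ∈ B, m * u + c ≤ f u := by
  by_cases hyB : y ∈ B
  · -- y ∈ B : take sSup of left slopes
    set S := (fun a : ℝ => (f y - f a) / (y - a)) '' {a | a ∈ B ∧ a < y} with hS
    have hSne : S.Nonempty := ⟨_, ⟨0, ⟨h0, hy.1⟩, rfl⟩⟩
    have hub : ∀ s ∈ S, ∀ b ∈ B, y < b → s ≤ (f b - f y) / (b - y) := by
      rintro s ⟨aa, ⟨haB, hay⟩, rfl⟩ b hbB hyb
      rw [div_le_div_iff₀ (by linarith) (by linarith)]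
      have hc := chordA_mem hconv haB hbB (lt_trans hay hyb) hay.le hyb.le hyB
      nlinarith [hc]
    have hSbdd : BddAbove S := ⟨(f 1 - f y) / (1 - y), fun s hs => hub s hs 1 h1 hy.2⟩
    refine ⟨sSup S, f y - sSup S * y, by rw [affExt, if_pos hyB]; ring, ?_⟩
    intro u huB
    rcases lt_trichotomy u y with hu | hu | hu
    · have hle : (f y - f u) / (y - u) ≤ sSup S := le_csSup hSbdd ⟨u, ⟨huB, hu⟩, rfl⟩
      rw [div_le_iff₀ (by linarith)] at hle
      nlinarith [hle]
    · rw [hu]; linarith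
    · have hge : sSup S ≤ (f u - f y) / (u - y) :=
        csSup_le hSne (fun s hs => hub s hs u huB hu)
      rw [le_div_iff₀ (by linarith)] at hge
      nlinarith [hge]
  · -- y ∉ B : take chord over the gap
    have hyI : y ∈ Icc (0:ℝ) 1 := ⟨hy.1.le, hy.2.le⟩
    obtain ⟨hpB, hqB, hpy, hyq, hpub, hqlb⟩ := gapF hBsub hBclosed h0 h1 hyI hyB
    set p := leftN B y with hp
    set q := rightN B y with hq
    have hpq : p < q := lt_trans hpy hyq
    have hqp0 : q - p ≠ 0 := by linarith
    refine ⟨(f q - f p) / (q - p), f p - (f q - f p) / (q - p) * p, ?_, ?_⟩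
    · rw [affExt, if_neg hyB, ← hp, ← hq]
      field_simp
      ring
    · intro u huB
      have key : ∀ x : ℝ, (f q - f p) * (x - p) ≤ (f u - f p) * (q - p) →
          (f q - f p) / (q - p) * x + (f p - (f q - f p) / (q - p) * p) ≤ f u := by
        intro x hx
        have h2 : (f q - f p) * (x - p) / (q - p) ≤ f u - f p := by
          rw [div_le_iff₀ (by linarith)]; linarith [hx]
        have h3 : (f q - f p) / (q - p) * x + (f p - (f q - f p) / (q - p) * p)
            = (f q - f p) * (x - p) / (q - p) + f p := by field_simp; ring
        rw [h3]; linarith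
      rcases le_or_gt u y with huy | huy
      · have hup : u ≤ p := hpub u huB huy
        rcases eq_or_lt_of_le hup with heq | hlt
        · subst heq
          apply key
          simp
        · apply key
          have hc := chordA_mem hconv huB hqB (by linarith) hlt.le hpq.le hpB
          nlinarith [hc]
      · have hqu : q ≤ u := hqlb u huB huy.le
        rcases eq_or_lt_of_le hqu with heq | hlt
        · subst heq
          apply key
          nlinarith
        · apply key
          have hc := chordA_mem hconv hpB huB (by linarith) hpq.le hlt.le hqB
          nlinarith [hc]

end Aux


/-- the affine extension of a continuous convex function on `B`
is convex on `[0,1]`. -/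
theorem stmt6 (B : Set ℝ) (hBsub : B ⊆ Set.Icc (0:ℝ) 1) (hBclosed : IsClosed B)
    (h0 : (0:ℝ) ∈ B) (h1 : (1:ℝ) ∈ B)
    (f : ℝ → ℝ) (hf : ContinuousOn f B)
    (hconv : ∀ x ∈ B, ∀ y ∈ B, ∀ l ∈ Set.Icc (0:ℝ) 1, l * x + (1 - l) * y ∈ B →
      f (l * x + (1 - l) * y) ≤ l * f x + (1 - l) * f y) :
    ConvexOn ℝ (Set.Icc (0:ℝ) 1) (affExt B f) := by
  refine ⟨convex_Icc 0 1, ?_⟩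
  intro x hx z hz a b ha hb hab
  simp only [smul_eq_mul]
  rcases eq_or_lt_of_le ha with ha0 | ha0
  · have hb1 : b = 1 := by linarith
    rw [← ha0, hb1]; simp
  rcases eq_or_lt_of_le hb with hb0 | hb0
  · have ha1 : a = 1 := by linarith
    rw [← hb0, ha1]; simp
  by_cases hxz : x = z
  · subst hxz
    have h1' : a * x + b * x = x := by rw [← add_mul, hab, one_mul]
    have h2' : a * affExt B f x + b * affExt B f x = affExt B f x := by
      rw [← add_mul, hab, one_mul]
    rw [h1', h2']
  · have hyI : a * x + b * z ∈ Ioo (0:ℝ) 1 := by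
      rcases lt_or_gt_of_ne hxz with h | h
      · constructor
        · nlinarith [hx.1]
        · nlinarith [hz.2]
      · constructor
        · nlinarith [hz.1]
        · nlinarith [hx.2]
    obtain ⟨m, c, hline, hBle⟩ := supp_line hBsub hBclosed h0 h1 hconv hyI
    have hsx : m * x + c ≤ affExt B f x := transfer hBsub hBclosed h0 h1 hBle hx
    have hsz : m * z + c ≤ affExt B f z := transfer hBsub hBclosed h0 h1 hBle hz
    have e : m * (a * x + b * z) + c = a * (m * x + c) + b * (m * z + c) := by
      calc m * (a * x + b * z) + c = a * (m * x) + b * (m * z) + (a + b) * c := by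
            rw [hab]; ring
        _ = a * (m * x + c) + b * (m * z + c) := by ring
    calc affExt B f (a * x + b * z) = m * (a * x + b * z) + c := hline.symm
      _ = a * (m * x + c) + b * (m * z + c) := e
      _ ≤ a * affExt B f x + b * affExt B f z :=
          add_le_add (mul_le_mul_of_nonneg_left hsx ha0.le)
            (mul_le_mul_of_nonneg_left hsz hb0.le)
end

section
/- Let B be a closed subset of [0,1] containing 0 and 1, and let f : B → ℝ be continuous and convex on B. Then the convex hull of the epigraph of f equals the epigraph of the affine extension L_B f: hull(epi(f)) = epi(L_B f), where epi(g) = {(t,y) : t in the domain of g, y ≥ g(t)}. -/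
open Set
open scoped Classical

/-- Epigraph of `f` restricted to a domain `A ⊆ ℝ`, as a subset of `ℝ²`. -/
def epiOn (A : Set ℝ) (f : ℝ → ℝ) : Set (ℝ × ℝ) := {p | p.1 ∈ A ∧ f p.1 ≤ p.2}

/-!
`L_B f` is convex on `[0,1]`: at every interior point it has a supporting line. At a point
of `B` this is the usual supporting line of a convex function, with slope the supremum of the
left slopes; in a gap `(a, b)` of `B` it is the chord through `a` and `b`. A line below `f`
on `B` stays below `L_B f`, which interpolates `f` linearly across the gaps. Hence the epigraph
of `L_B f` is a convex set containing `epi f`; conversely each point above a gap lies on a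
segment joining two points of `epi f` over the ends of the gap.
-/

def ConvexOnPoints (B : Set ℝ) (f : ℝ → ℝ) : Prop :=
  ∀ x ∈ B, ∀ y ∈ B, ∀ l ∈ Icc (0:ℝ) 1, l * x + (1 - l) * y ∈ B →
    f (l * x + (1 - l) * y) ≤ l * f x + (1 - l) * f y

theorem convexOn_Icc_of_forall_exists_support {a b : ℝ} {g : ℝ → ℝ}
    (h : ∀ v ∈ Ioo a b, ∃ m, ∀ u ∈ Icc a b, g v + m * (u - v) ≤ g u) :
    ConvexOn ℝ (Icc a b) g := by
  refine convexOn_of_slope_mono_adjacent (convex_Icc a b) fun {x v z} hx hz hxv hvz => ?_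
  obtain ⟨m, hm⟩ := h v ⟨hx.1.trans_lt hxv, hvz.trans_le hz.2⟩
  have hleft : (g v - g x) / (v - x) ≤ m := by
    rw [div_le_iff₀ (sub_pos.2 hxv)]; linarith [hm x hx]
  have hright : m ≤ (g z - g v) / (z - v) := by
    rw [le_div_iff₀ (sub_pos.2 hvz)]; linarith [hm z hz]
  exact hleft.trans hright

section Extension

variable {B : Set ℝ} {f : ℝ → ℝ}

theorem ConvexOnPoints.slope_le_slope (hconv : ConvexOnPoints B f) {u v w : ℝ}
    (hu : u ∈ B) (hv : v ∈ B) (hw : w ∈ B) (huv : u < v) (hvw : v < w) :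
    (f v - f u) / (v - u) ≤ (f w - f v) / (w - v) := by
  have hwu : 0 < w - u := by linarith
  set l := (w - v) / (w - u)
  have hlw : l * (w - u) = w - v := div_mul_cancel₀ _ hwu.ne'
  have hcomb : l * u + (1 - l) * w = v := by linear_combination -hlw
  have hchord := hconv u hu w hw l
    ⟨div_nonneg (by linarith) hwu.le, (div_le_one hwu).2 (by linarith)⟩ (hcomb ▸ hv)
  rw [hcomb] at hchord
  rw [div_le_div_iff₀ (by linarith) (by linarith)]
  linear_combination mul_le_mul_of_nonneg_left hchord hwu.le + (f u - f w) * hlw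

theorem ConvexOnPoints.exists_support (hconv : ConvexOnPoints B f) {v : ℝ} (hv : v ∈ B)
    (hl : ∃ u ∈ B, u < v) (hr : ∃ w ∈ B, v < w) :
    ∃ m, ∀ s ∈ B, f v + m * (s - v) ≤ f s := by
  set L := {r | ∃ s ∈ B, s < v ∧ r = (f v - f s) / (v - s)}
  have hLR : ∀ r ∈ L, ∀ w ∈ B, v < w → r ≤ (f w - f v) / (w - v) := by
    rintro r ⟨s, hs, hsv, rfl⟩ w hw hvw
    exact hconv.slope_le_slope hs hv hw hsv hvw
  obtain ⟨u, hu, huv⟩ := hl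
  obtain ⟨w, hw, hvw⟩ := hr
  have hne : L.Nonempty := ⟨_, u, hu, huv, rfl⟩
  have hbdd : BddAbove L := ⟨_, fun r hr => hLR r hr w hw hvw⟩
  refine ⟨sSup L, fun s hs => ?_⟩
  rcases lt_trichotomy s v with hsv | rfl | hvs
  · have hle := le_csSup hbdd ⟨s, hs, hsv, rfl⟩
    rw [div_le_iff₀ (sub_pos.2 hsv)] at hle
    linarith
  · simp
  · have hle := csSup_le hne fun r hr => hLR r hr s hs hvs
    rw [le_div_iff₀ (sub_pos.2 hvs)] at hle
    linarith

theorem leftN_mem (hBclosed : IsClosed B) (h0 : (0:ℝ) ∈ B) {t : ℝ} (ht : 0 ≤ t) :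
    leftN B t ∈ B ∧ leftN B t ≤ t :=
  (hBclosed.inter isClosed_Iic).csSup_mem ⟨0, h0, ht⟩ ⟨t, fun _ hu => hu.2⟩

theorem rightN_mem (hBclosed : IsClosed B) (h1 : (1:ℝ) ∈ B) {t : ℝ} (ht : t ≤ 1) :
    rightN B t ∈ B ∧ t ≤ rightN B t :=
  (hBclosed.inter isClosed_Ici).csInf_mem ⟨1, h1, ht⟩ ⟨t, fun _ hu => hu.2⟩

theorem le_leftN_or_rightN_le {t s : ℝ} (hs : s ∈ B) : s ≤ leftN B t ∨ rightN B t ≤ s := by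
  rcases le_or_gt s t with h | h
  · exact .inl <| le_csSup ⟨t, fun _ hu => hu.2⟩ ⟨hs, h⟩
  · exact .inr <| csInf_le ⟨t, fun _ hu => hu.2⟩ ⟨hs, h.le⟩

theorem leftN_lt_and_lt_rightN (hBclosed : IsClosed B) (h0 : (0:ℝ) ∈ B) (h1 : (1:ℝ) ∈ B) {t : ℝ}
    (ht : t ∈ Icc (0:ℝ) 1) (htB : t ∉ B) : leftN B t < t ∧ t < rightN B t := by
  obtain ⟨haB, hat⟩ := leftN_mem hBclosed h0 ht.1
  obtain ⟨hbB, htb⟩ := rightN_mem hBclosed h1 ht.2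
  exact ⟨hat.lt_of_ne fun h => htB (h ▸ haB), htb.lt_of_ne fun h => htB (h ▸ hbB)⟩

theorem affExt_of_mem {t : ℝ} (ht : t ∈ B) : affExt B f t = f t := if_pos ht

theorem affExt_eq_of_notMem {t : ℝ} (htB : t ∉ B) (hab : leftN B t < rightN B t) :
    affExt B f t = f (leftN B t) + (f (rightN B t) - f (leftN B t))
      / (rightN B t - leftN B t) * (t - leftN B t) := by
  rw [affExt, if_neg htB]
  field_simp [sub_ne_zero.2 hab.ne']
  ring

theorem exists_affExt_eq_combo (hBclosed : IsClosed B) (h0 : (0:ℝ) ∈ B) (h1 : (1:ℝ) ∈ B)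
    {t : ℝ} (ht : t ∈ Icc (0:ℝ) 1) (htB : t ∉ B) :
    ∃ a ∈ B, ∃ b ∈ B, ∃ r ∈ Icc (0:ℝ) 1,
      t = (1 - r) * a + r * b ∧ affExt B f t = (1 - r) * f a + r * f b := by
  obtain ⟨hat, htb⟩ := leftN_lt_and_lt_rightN hBclosed h0 h1 ht htB
  have hba : 0 < rightN B t - leftN B t := by linarith
  refine ⟨_, (leftN_mem hBclosed h0 ht.1).1, _, (rightN_mem hBclosed h1 ht.2).1,
    (t - leftN B t) / (rightN B t - leftN B t),
    ⟨div_nonneg (by linarith) hba.le, (div_le_one hba).2 (by linarith)⟩, ?_, if_neg htB⟩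
  field_simp
  ring

theorem le_affExt_of_forall_le (hBclosed : IsClosed B) (h0 : (0:ℝ) ∈ B) (h1 : (1:ℝ) ∈ B)
    {y v m : ℝ} (h : ∀ s ∈ B, y + m * (s - v) ≤ f s) {t : ℝ} (ht : t ∈ Icc (0:ℝ) 1) :
    y + m * (t - v) ≤ affExt B f t := by
  by_cases htB : t ∈ B
  · rw [affExt_of_mem htB]; exact h t htB
  obtain ⟨a, ha, b, hb, r, ⟨hr0, hr1⟩, rfl, heq⟩ := exists_affExt_eq_combo hBclosed h0 h1 ht htB
  rw [heq]
  nlinarith [h a ha, h b hb]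

theorem ConvexOnPoints.exists_support_of_notMem (hconv : ConvexOnPoints B f)
    (hBclosed : IsClosed B) (h0 : (0:ℝ) ∈ B) (h1 : (1:ℝ) ∈ B) {t : ℝ}
    (ht : t ∈ Icc (0:ℝ) 1) (htB : t ∉ B) :
    ∃ m, ∀ s ∈ B, affExt B f t + m * (s - t) ≤ f s := by
  obtain ⟨hat, htb⟩ := leftN_lt_and_lt_rightN hBclosed h0 h1 ht htB
  have ha := (leftN_mem hBclosed h0 ht.1).1
  have hb := (rightN_mem hBclosed h1 ht.2).1
  set a := leftN B t
  set b := rightN B t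
  set m := (f b - f a) / (b - a) with hm
  have hmba : m * (b - a) = f b - f a := div_mul_cancel₀ _ (by linarith)
  refine ⟨m, fun s hs => ?_⟩
  rw [affExt_eq_of_notMem htB (hat.trans htb), ← hm]
  rcases le_leftN_or_rightN_le (t := t) hs with hsa | hbs
  · rcases hsa.lt_or_eq with hsa | rfl
    · have hle := hconv.slope_le_slope hs ha hb hsa (hat.trans htb)
      rw [← hm, div_le_iff₀ (sub_pos.2 hsa)] at hle
      linarith
    · linarith
  · rcases hbs.lt_or_eq with hbs | rfl
    · have hle := hconv.slope_le_slope ha hb hs (hat.trans htb) hbs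
      rw [← hm, le_div_iff₀ (sub_pos.2 hbs)] at hle
      linarith
    · linarith

theorem ConvexOnPoints.convexOn_affExt (hconv : ConvexOnPoints B f) (hBclosed : IsClosed B)
    (h0 : (0:ℝ) ∈ B) (h1 : (1:ℝ) ∈ B) : ConvexOn ℝ (Icc 0 1) (affExt B f) := by
  refine convexOn_Icc_of_forall_exists_support fun v hv => ?_
  have hsupport : ∃ m, ∀ s ∈ B, affExt B f v + m * (s - v) ≤ f s := by
    by_cases hvB : v ∈ B
    · rw [affExt_of_mem hvB]
      exact hconv.exists_support hvB ⟨0, h0, hv.1⟩ ⟨1, h1, hv.2⟩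
    · exact hconv.exists_support_of_notMem hBclosed h0 h1 (Ioo_subset_Icc_self hv) hvB
  obtain ⟨m, hm⟩ := hsupport
  exact ⟨m, fun u hu => le_affExt_of_forall_le hBclosed h0 h1 hm hu⟩

theorem ConvexOnPoints.convexHull_epiOn_subset (hconv : ConvexOnPoints B f)
    (hBsub : B ⊆ Icc (0:ℝ) 1) (hBclosed : IsClosed B) (h0 : (0:ℝ) ∈ B) (h1 : (1:ℝ) ∈ B) :
    convexHull ℝ (epiOn B f) ⊆ epiOn (Icc (0:ℝ) 1) (affExt B f) :=
  convexHull_min (fun _ ⟨hp, hfp⟩ => ⟨hBsub hp, (affExt_of_mem hp).trans_le hfp⟩)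
    (hconv.convexOn_affExt hBclosed h0 h1).convex_epigraph

theorem epiOn_affExt_subset_convexHull (hBclosed : IsClosed B) (h0 : (0:ℝ) ∈ B)
    (h1 : (1:ℝ) ∈ B) : epiOn (Icc (0:ℝ) 1) (affExt B f) ⊆ convexHull ℝ (epiOn B f) := by
  rintro ⟨t, y⟩ ⟨ht : t ∈ Icc 0 1, hty : affExt B f t ≤ y⟩
  by_cases htB : t ∈ B
  · exact subset_convexHull ℝ _ ⟨htB, (affExt_of_mem htB).symm.trans_le hty⟩
  obtain ⟨a, ha, b, hb, r, ⟨hr0, hr1⟩, hta, heq⟩ :=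
    exists_affExt_eq_combo (f := f) hBclosed h0 h1 ht htB
  -- Lift both ends of the chord by the same height `d` above the graph.
  set d := y - affExt B f t
  have hcombo : ((t, y) : ℝ × ℝ) = (1 - r) • (a, f a + d) + r • (b, f b + d) := by
    ext
    · simp [hta]
    · simp only [Prod.snd_add, Prod.smul_snd, smul_eq_mul, d, heq]; ring
  rw [hcombo]
  have hd : 0 ≤ d := sub_nonneg.2 hty
  have hmem {s : ℝ} (hs : s ∈ B) : (s, f s + d) ∈ convexHull ℝ (epiOn B f) :=
    subset_convexHull ℝ _ ⟨hs, le_add_of_nonneg_right hd⟩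
  exact convex_convexHull ℝ _ (hmem ha) (hmem hb) (by linarith) hr0 (by ring)

end Extension

theorem stmt7_general (B : Set ℝ) (hBsub : B ⊆ Set.Icc (0:ℝ) 1) (hBclosed : IsClosed B)
    (h0 : (0:ℝ) ∈ B) (h1 : (1:ℝ) ∈ B)
    (f : ℝ → ℝ)
    (hconv : ∀ x ∈ B, ∀ y ∈ B, ∀ l ∈ Set.Icc (0:ℝ) 1, l * x + (1 - l) * y ∈ B →
      f (l * x + (1 - l) * y) ≤ l * f x + (1 - l) * f y) :
    convexHull ℝ (epiOn B f) = epiOn (Set.Icc (0:ℝ) 1) (affExt B f) :=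
  (ConvexOnPoints.convexHull_epiOn_subset hconv hBsub hBclosed h0 h1).antisymm
    (epiOn_affExt_subset_convexHull hBclosed h0 h1)

/-- for `f` continuous and convex on `B`, the convex hull of the epigraph of `f`
equals the epigraph of the affine extension `L_B f`. -/
theorem stmt7 (B : Set ℝ) (hBsub : B ⊆ Set.Icc (0:ℝ) 1) (hBclosed : IsClosed B)
    (h0 : (0:ℝ) ∈ B) (h1 : (1:ℝ) ∈ B)
    (f : ℝ → ℝ) (hf : ContinuousOn f B)
    (hconv : ∀ x ∈ B, ∀ y ∈ B, ∀ l ∈ Set.Icc (0:ℝ) 1, l * x + (1 - l) * y ∈ B →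
      f (l * x + (1 - l) * y) ≤ l * f x + (1 - l) * f y) :
    convexHull ℝ (epiOn B f) = epiOn (Set.Icc (0:ℝ) 1) (affExt B f) :=
  stmt7_general B hBsub hBclosed h0 h1 f hconv
end

section
/- Let B be a closed subset of [0,1] containing 0 and 1, and let f : B → ℝ be continuous. Then epi(L_B f) ⊆ hull(epi(f)), i.e., the epigraph of the affine extension of f is contained in the convex hull of the epigraph of f, without any convexity assumption on f. -/
open Set
open scoped Classical

/-- for any continuous `f` on `B` (no convexity assumed), the epigraph of the
affine extension `L_B f` is contained in the convex hull of the epigraph of `f`. -/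
theorem stmt8 (B : Set ℝ) (hBsub : B ⊆ Set.Icc (0:ℝ) 1) (hBclosed : IsClosed B)
    (h0 : (0:ℝ) ∈ B) (h1 : (1:ℝ) ∈ B)
    (f : ℝ → ℝ) (hf : ContinuousOn f B) :
    epiOn (Set.Icc (0:ℝ) 1) (affExt B f) ⊆ convexHull ℝ (epiOn B f) := by
  rintro ⟨t, y⟩ ⟨ht, hy⟩
  by_cases htB : t ∈ B
  · apply subset_convexHull
    refine ⟨htB, ?_⟩
    simpa [affExt, htB] using hy
  · -- left and right neighbors
    have hA : leftN B t ∈ {u ∈ B | u ≤ t} :=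
      (hBclosed.inter isClosed_Iic).csSup_mem ⟨0, h0, ht.1⟩ ⟨t, fun u hu => hu.2⟩
    have hC : rightN B t ∈ {u ∈ B | t ≤ u} :=
      (hBclosed.inter isClosed_Ici).csInf_mem ⟨1, h1, ht.2⟩ ⟨t, fun u hu => hu.2⟩
    set a := leftN B t with ha_def
    set b := rightN B t with hb_def
    have haB : a ∈ B := hA.1
    have hbB : b ∈ B := hC.1
    have hat : a < t := lt_of_le_of_ne hA.2 (fun h => htB (h ▸ haB))
    have htb : t < b := lt_of_le_of_ne hC.2 (fun h => htB (h ▸ hbB))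
    have hab : (0:ℝ) < b - a := by linarith
    set lam := (t - a) / (b - a) with hlam_def
    have hlam0 : 0 < lam := div_pos (by linarith) hab
    have hlam1 : lam < 1 := (div_lt_one hab).2 (by linarith)
    have hy' : (1 - lam) * f a + lam * f b ≤ y := by
      simpa [affExt, htB, ← ha_def, ← hb_def, ← hlam_def] using hy
    set d := y - ((1 - lam) * f a + lam * f b) with hd_def
    have hd : 0 ≤ d := by linarith
    have hp : (a, f a + d) ∈ epiOn B f := ⟨haB, by simp; linarith⟩
    have hq : (b, f b + d) ∈ epiOn B f := ⟨hbB, by simp; linarith⟩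
    have hcomb : (1 - lam) • ((a : ℝ), f a + d) + lam • ((b : ℝ), f b + d) = (t, y) := by
      have h1 : (1 - lam) * a + lam * b = t := by
        have : lam * (b - a) = t - a := by
          rw [hlam_def]; field_simp
        nlinarith [this]
      have h2 : (1 - lam) * (f a + d) + lam * (f b + d) = y := by
        rw [hd_def]; ring
      simp [Prod.ext_iff, h1, h2]
    have := (convex_convexHull ℝ (epiOn B f))
      (subset_convexHull ℝ _ hp) (subset_convexHull ℝ _ hq)
      (by linarith : (0:ℝ) ≤ 1 - lam) (le_of_lt hlam0) (by ring)
    rwa [hcomb] at this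
end

section
/- Let F = F₁ × ⋯ × F_d, where each F_i is a closed subset of [0,1] containing 0 and 1, and let f : F → ℝ be continuous. Then there exists a unique continuous function g : [0,1]^d → ℝ equal to f on F such that for every i ∈ {1,…,d} and every t ∈ [0,1]^d, the one-dimensional cut u_i ↦ g(u_i, t_{∼i}) is affine on each interval contained in [0,1] \ F_i. This g is called the multiaffine extension P_{F→[0,1]^d}(f). -/
/-!
Extend `f` one coordinate at a time. The operator `E_i` replaces a function, along each cut in
direction `i`, by the affine interpolation of its values at the two ends of every gap of `F_i`.
It keeps the values at points with `t_i ∈ F_i`, makes the cuts in direction `i` affine on gaps,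
and preserves that property in every other direction; so `E_1 ⋯ E_d f` is a multiaffine extension.
It is continuous because the affine interpolation of a function that is Lipschitz up to an error
`ε` is Lipschitz with the same constant up to `3ε`, while a continuous function on the compact
set `F` is, for every `ε > 0`, Lipschitz up to `ε`.

For uniqueness, a continuous `g` with affine cuts is fixed by every `E_i`, since continuity
determines its values at the ends of each gap. Hence `g = E_1 ⋯ E_d g`, and the right-hand side
only depends on the restriction of `g` to `F`.
-/

open Set
open scoped Classical

/-- Neighbor `t^ε` of `t` in `Fi` (with the convention `t^- = t^+ = t` for `t ∈ Fi`). -/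
noncomputable def nbr (Fi : Set ℝ) (t : ℝ) (ε : Bool) : ℝ :=
  if t ∈ Fi then t else if ε then rightN Fi t else leftN Fi t

/-- Weight `ω_ε(t)` (with the convention `ω_-(t) = ω_+(t) = 1/2` for `t ∈ Fi`). -/
noncomputable def wt (Fi : Set ℝ) (t : ℝ) (ε : Bool) : ℝ :=
  if t ∈ Fi then 1/2
  else if ε then (t - leftN Fi t) / (rightN Fi t - leftN Fi t)
  else 1 - (t - leftN Fi t) / (rightN Fi t - leftN Fi t)

/-- The multiaffine extension `P_{F → [0,1]^d}(f)`, via its explicit formula. -/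
noncomputable def multiExt {d : ℕ} (F : Fin d → Set ℝ) (f : (Fin d → ℝ) → ℝ)
    (t : Fin d → ℝ) : ℝ :=
  ∑ ε : Fin d → Bool, (∏ j, wt (F j) (t j) (ε j)) * f (fun j => nbr (F j) (t j) (ε j))

/-- The unit cube `[0,1]^d`. -/
def cube (d : ℕ) : Set (Fin d → ℝ) := Set.pi Set.univ fun _ => Set.Icc (0:ℝ) 1

open Function

section OneDim

variable {B : Set ℝ} {h h₁ h₂ : ℝ → ℝ} {u u' ε K : ℝ}

lemma leftN_mem_s9 (hB : IsClosed B) (hB0 : (0:ℝ) ∈ B) (hu : 0 ≤ u) : leftN B u ∈ B :=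
  ((hB.inter isClosed_Iic).csSup_mem ⟨0, hB0, hu⟩ ⟨u, fun _ hv => hv.2⟩).1

lemma rightN_mem_s9 (hB : IsClosed B) (hB1 : (1:ℝ) ∈ B) (hu : u ≤ 1) : rightN B u ∈ B :=
  ((hB.inter isClosed_Ici).csInf_mem ⟨1, hB1, hu⟩ ⟨u, fun _ hv => hv.2⟩).1

lemma leftN_le (hB0 : (0:ℝ) ∈ B) (hu : 0 ≤ u) : leftN B u ≤ u :=
  csSup_le ⟨0, hB0, hu⟩ fun _ hv => hv.2

lemma le_rightN (hB1 : (1:ℝ) ∈ B) (hu : u ≤ 1) : u ≤ rightN B u :=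
  le_csInf ⟨1, hB1, hu⟩ fun _ hv => hv.2

lemma le_leftN {v : ℝ} (hv : v ∈ B) (hvu : v ≤ u) : v ≤ leftN B u :=
  le_csSup ⟨u, fun _ hw => hw.2⟩ ⟨hv, hvu⟩

lemma rightN_le {v : ℝ} (hv : v ∈ B) (huv : u ≤ v) : rightN B u ≤ v :=
  csInf_le ⟨u, fun _ hw => hw.2⟩ ⟨hv, huv⟩

lemma leftN_of_mem (hu : u ∈ B) : leftN B u = u :=
  IsGreatest.csSup_eq ⟨⟨hu, le_rfl⟩, fun _ hv => hv.2⟩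

lemma rightN_of_mem (hu : u ∈ B) : rightN B u = u :=
  IsLeast.csInf_eq ⟨⟨hu, le_rfl⟩, fun _ hv => hv.2⟩

lemma notMem_of_mem_Ioo_leftN_rightN {v : ℝ} (hv : v ∈ Ioo (leftN B u) (rightN B u)) :
    v ∉ B := fun hvB =>
  (le_total v u).elim (fun hvu => (le_leftN hvB hvu).not_gt hv.1)
    fun huv => (rightN_le hvB huv).not_gt hv.2

lemma leftN_eq_of_notMem_Ioc (huu' : u ≤ u') (h : ∀ v ∈ Ioc u u', v ∉ B) :
    leftN B u' = leftN B u := by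
  refine congrArg sSup (Set.ext fun v => ⟨fun hv => ⟨hv.1, ?_⟩, fun hv => ⟨hv.1, hv.2.trans huu'⟩⟩)
  by_contra hvu
  exact h v ⟨not_le.1 hvu, hv.2⟩ hv.1

lemma rightN_eq_of_notMem_Ico (huu' : u ≤ u') (h : ∀ v ∈ Ico u u', v ∉ B) :
    rightN B u = rightN B u' := by
  refine congrArg sInf (Set.ext fun v => ⟨fun hv => ⟨hv.1, ?_⟩, fun hv => ⟨hv.1, huu'.trans hv.2⟩⟩)
  by_contra hvu
  exact h v ⟨hv.2, not_le.1 hvu⟩ hv.1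

/-- For `u ∈ B` the gap degenerates to `{u}` and this is `0 / 0 = 0`. -/
noncomputable def gapWeight (B : Set ℝ) (u : ℝ) : ℝ :=
  (u - leftN B u) / (rightN B u - leftN B u)

lemma affExt_eq_gapWeight (B : Set ℝ) (h : ℝ → ℝ) (u : ℝ) :
    affExt B h u = (1 - gapWeight B u) * h (leftN B u) + gapWeight B u * h (rightN B u) := by
  unfold affExt gapWeight
  split_ifs with hu
  · simp [leftN_of_mem hu, rightN_of_mem hu]
  · rfl

lemma gapWeight_mem_Icc (hB0 : (0:ℝ) ∈ B) (hB1 : (1:ℝ) ∈ B) (hu : u ∈ Icc (0:ℝ) 1) :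
    gapWeight B u ∈ Icc (0:ℝ) 1 := by
  have hl := leftN_le hB0 hu.1
  have hr := le_rightN hB1 hu.2
  exact ⟨div_nonneg (by linarith) (by linarith), div_le_one_of_le₀ (by linarith) (by linarith)⟩

lemma gapWeight_mul (hB0 : (0:ℝ) ∈ B) (hB1 : (1:ℝ) ∈ B) (hu : u ∈ Icc (0:ℝ) 1) :
    gapWeight B u * (rightN B u - leftN B u) = u - leftN B u := by
  have hl := leftN_le hB0 hu.1
  have hr := le_rightN hB1 hu.2
  rcases eq_or_ne (rightN B u - leftN B u) 0 with h0 | h0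
  · rw [h0, mul_zero]; linarith
  · exact div_mul_cancel₀ _ h0

lemma exists_affExt_eq_affine_on_Ioo {a b : ℝ} (hab : ∀ v ∈ Ioo a b, v ∉ B) :
    ∃ c e : ℝ, ∀ u ∈ Ioo a b, affExt B h u = c * u + e := by
  set L := leftN B a
  set R := rightN B b
  refine ⟨(h R - h L) / (R - L), h L - (h R - h L) / (R - L) * L, fun u hu => ?_⟩
  have hL : leftN B u = L :=
    leftN_eq_of_notMem_Ioc hu.1.le fun v hv => hab v ⟨hv.1, hv.2.trans_lt hu.2⟩
  have hR : rightN B u = R :=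
    rightN_eq_of_notMem_Ico hu.2.le fun v hv => hab v ⟨hu.1.trans_le hv.1, hv.2⟩
  rw [affExt_eq_gapWeight, gapWeight, hL, hR]
  ring

lemma affExt_congr (hB : IsClosed B) (hB0 : (0:ℝ) ∈ B) (hB1 : (1:ℝ) ∈ B)
    (hu : u ∈ Icc (0:ℝ) 1) (h : EqOn h₁ h₂ B) : affExt B h₁ u = affExt B h₂ u := by
  rw [affExt_eq_gapWeight, affExt_eq_gapWeight, h (leftN_mem_s9 hB hB0 hu.1),
    h (rightN_mem_s9 hB hB1 hu.2)]

lemma abs_affExt_sub_affExt_le_of_le (hB : IsClosed B) (hB0 : (0:ℝ) ∈ B) (hB1 : (1:ℝ) ∈ B)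
    (hu : u ∈ Icc (0:ℝ) 1) {η : ℝ} (hη : ∀ v ∈ B, |h₁ v - h₂ v| ≤ η) :
    |affExt B h₁ u - affExt B h₂ u| ≤ η := by
  obtain ⟨hθ0, hθ1⟩ := gapWeight_mem_Icc hB0 hB1 hu
  have hl := hη _ (leftN_mem_s9 hB hB0 hu.1)
  have hr := hη _ (rightN_mem_s9 hB hB1 hu.2)
  rw [affExt_eq_gapWeight, affExt_eq_gapWeight]
  set θ := gapWeight B u
  calc _ = |(1 - θ) * (h₁ (leftN B u) - h₂ (leftN B u))
          + θ * (h₁ (rightN B u) - h₂ (rightN B u))| := by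
        ring_nf
    _ ≤ (1 - θ) * η + θ * η := by
        refine (abs_add_le _ _).trans ?_
        rw [abs_mul, abs_mul, abs_of_nonneg (sub_nonneg.2 hθ1), abs_of_nonneg hθ0]
        gcongr
    _ = η := by ring

lemma mul_abs_apply_sub_le (hh : ∀ x ∈ B, ∀ y ∈ B, |h x - h y| ≤ ε + K * |x - y|) (hε : 0 ≤ ε)
    {s x y : ℝ} (hs : s ∈ Icc (0:ℝ) 1) (hx : x ∈ B) (hy : y ∈ B) :
    s * |h x - h y| ≤ ε + K * (s * |x - y|) :=
  calc s * |h x - h y| ≤ s * (ε + K * |x - y|) := mul_le_mul_of_nonneg_left (hh x hx y hy) hs.1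
    _ = s * ε + K * (s * |x - y|) := by ring
    _ ≤ ε + K * (s * |x - y|) := by gcongr; exact mul_le_of_le_one_left hε hs.2

lemma abs_affExt_sub_leftN_le (hB : IsClosed B) (hB0 : (0:ℝ) ∈ B) (hB1 : (1:ℝ) ∈ B)
    (hh : ∀ x ∈ B, ∀ y ∈ B, |h x - h y| ≤ ε + K * |x - y|) (hε : 0 ≤ ε)
    (hu : u ∈ Icc (0:ℝ) 1) :
    |affExt B h u - h (leftN B u)| ≤ ε + K * (u - leftN B u) := by
  have hθ := gapWeight_mem_Icc hB0 hB1 hu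
  have hlr : leftN B u ≤ rightN B u := (leftN_le hB0 hu.1).trans (le_rightN hB1 hu.2)
  have hdiff : affExt B h u - h (leftN B u)
      = gapWeight B u * (h (rightN B u) - h (leftN B u)) := by
    rw [affExt_eq_gapWeight]; ring
  calc |affExt B h u - h (leftN B u)|
      = gapWeight B u * |h (rightN B u) - h (leftN B u)| := by
        rw [hdiff, abs_mul, abs_of_nonneg hθ.1]
    _ ≤ ε + K * (gapWeight B u * |rightN B u - leftN B u|) :=
        mul_abs_apply_sub_le hh hε hθ (rightN_mem_s9 hB hB1 hu.2) (leftN_mem_s9 hB hB0 hu.1)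
    _ = ε + K * (u - leftN B u) := by
        rw [abs_of_nonneg (sub_nonneg.2 hlr), gapWeight_mul hB0 hB1 hu]

lemma abs_affExt_sub_rightN_le (hB : IsClosed B) (hB0 : (0:ℝ) ∈ B) (hB1 : (1:ℝ) ∈ B)
    (hh : ∀ x ∈ B, ∀ y ∈ B, |h x - h y| ≤ ε + K * |x - y|) (hε : 0 ≤ ε)
    (hu : u ∈ Icc (0:ℝ) 1) :
    |affExt B h u - h (rightN B u)| ≤ ε + K * (rightN B u - u) := by
  have hθ := gapWeight_mem_Icc hB0 hB1 hu
  have hθ' : 1 - gapWeight B u ∈ Icc (0:ℝ) 1 := ⟨sub_nonneg.2 hθ.2, by linarith [hθ.1]⟩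
  have hlr : leftN B u ≤ rightN B u := (leftN_le hB0 hu.1).trans (le_rightN hB1 hu.2)
  have hdiff : affExt B h u - h (rightN B u)
      = (1 - gapWeight B u) * (h (leftN B u) - h (rightN B u)) := by
    rw [affExt_eq_gapWeight]; ring
  calc |affExt B h u - h (rightN B u)|
      = (1 - gapWeight B u) * |h (leftN B u) - h (rightN B u)| := by
        rw [hdiff, abs_mul, abs_of_nonneg hθ'.1]
    _ ≤ ε + K * ((1 - gapWeight B u) * |leftN B u - rightN B u|) :=
        mul_abs_apply_sub_le hh hε hθ' (leftN_mem_s9 hB hB0 hu.1) (rightN_mem_s9 hB hB1 hu.2)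
    _ = ε + K * (rightN B u - u) := by
        rw [abs_sub_comm, abs_of_nonneg (sub_nonneg.2 hlr), sub_mul, gapWeight_mul hB0 hB1 hu]
        ring

lemma abs_affExt_sub_affExt_le (hB : IsClosed B) (hB0 : (0:ℝ) ∈ B) (hB1 : (1:ℝ) ∈ B)
    (hh : ∀ x ∈ B, ∀ y ∈ B, |h x - h y| ≤ ε + K * |x - y|) (hε : 0 ≤ ε)
    (hu : u ∈ Icc (0:ℝ) 1) (hu' : u' ∈ Icc (0:ℝ) 1) :
    |affExt B h u - affExt B h u'| ≤ 3 * ε + K * |u - u'| := by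
  wlog huu' : u ≤ u' generalizing u u'
  · rw [abs_sub_comm, abs_sub_comm u]
    exact this hu' hu (le_of_not_ge huu')
  by_cases hmeet : ∃ v ∈ B, v ∈ Icc u u'
  · obtain ⟨v, hvB, hv⟩ := hmeet
    have hrl : rightN B u ≤ leftN B u' := (rightN_le hvB hv.1).trans (le_leftN hvB hv.2)
    calc |affExt B h u - affExt B h u'|
        ≤ |affExt B h u - h (rightN B u)| + |h (rightN B u) - h (leftN B u')|
          + |h (leftN B u') - affExt B h u'| :=
          (abs_sub_le _ (h (leftN B u')) _).trans
            (add_le_add_left (abs_sub_le _ (h (rightN B u)) _) _)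
      _ ≤ (ε + K * (rightN B u - u)) + (ε + K * |rightN B u - leftN B u'|)
          + (ε + K * (u' - leftN B u')) := by
          gcongr
          · exact abs_affExt_sub_rightN_le hB hB0 hB1 hh hε hu
          · exact hh _ (rightN_mem_s9 hB hB1 hu.2) _ (leftN_mem_s9 hB hB0 hu'.1)
          · rw [abs_sub_comm]; exact abs_affExt_sub_leftN_le hB hB0 hB1 hh hε hu'
      _ = 3 * ε + K * |u - u'| := by
          rw [abs_of_nonpos (sub_nonpos.2 hrl), abs_of_nonpos (sub_nonpos.2 huu')]
          ring
  · push Not at hmeet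
    have hl : leftN B u' = leftN B u :=
      leftN_eq_of_notMem_Ioc huu' fun v hv hvB => hmeet v hvB (Ioc_subset_Icc_self hv)
    have hr : rightN B u = rightN B u' :=
      rightN_eq_of_notMem_Ico huu' fun v hv hvB => hmeet v hvB (Ico_subset_Icc_self hv)
    have hθ := gapWeight_mem_Icc hB0 hB1 hu
    have hθ' := gapWeight_mem_Icc hB0 hB1 hu'
    have hs : |gapWeight B u - gapWeight B u'| ∈ Icc (0:ℝ) 1 :=
      ⟨abs_nonneg _, abs_sub_le_iff.2 ⟨by linarith [hθ.2, hθ'.1], by linarith [hθ.1, hθ'.2]⟩⟩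
    have hdiff : affExt B h u - affExt B h u'
        = (gapWeight B u - gapWeight B u') * (h (rightN B u) - h (leftN B u)) := by
      rw [affExt_eq_gapWeight, affExt_eq_gapWeight, hl, ← hr]; ring
    have hgap : (gapWeight B u - gapWeight B u') * (rightN B u - leftN B u) = u - u' := by
      have := gapWeight_mul hB0 hB1 hu'
      rw [hl, ← hr] at this
      linear_combination gapWeight_mul hB0 hB1 hu - this
    calc |affExt B h u - affExt B h u'|
        = |gapWeight B u - gapWeight B u'| * |h (rightN B u) - h (leftN B u)| := by
          rw [hdiff, abs_mul]
      _ ≤ ε + K * (|gapWeight B u - gapWeight B u'| * |rightN B u - leftN B u|) :=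
          mul_abs_apply_sub_le hh hε hs (rightN_mem_s9 hB hB1 hu.2) (leftN_mem_s9 hB hB0 hu.1)
      _ ≤ 3 * ε + K * |u - u'| := by
          rw [← abs_mul, hgap]
          linarith

end OneDim

def ApproxLipschitzOn {X : Type*} [PseudoMetricSpace X] (g : X → ℝ) (S : Set X) : Prop :=
  ∀ ε > 0, ∃ L : ℝ, ∀ x ∈ S, ∀ y ∈ S, |g x - g y| ≤ ε + L * dist x y

section ApproxLipschitzOn

variable {X : Type*} [PseudoMetricSpace X] {g : X → ℝ} {S : Set X}

/-- Uniform continuity handles small distances, boundedness the large ones. -/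
lemma ContinuousOn.approxLipschitzOn (hS : IsCompact S) (hg : ContinuousOn g S) :
    ApproxLipschitzOn g S := by
  obtain ⟨M, hM⟩ := hS.exists_bound_of_continuousOn hg
  intro ε hε
  obtain ⟨δ, hδ, hδε⟩ :=
    Metric.uniformContinuousOn_iff_le.1 (hS.uniformContinuousOn_of_continuous hg) ε hε
  refine ⟨2 * M / δ, fun x hx y hy => ?_⟩
  have hM0 : 0 ≤ M := (norm_nonneg _).trans (hM x hx)
  rcases le_or_gt (dist x y) δ with hxy | hxy
  · have : 0 ≤ 2 * M / δ * dist x y := by positivity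
    linarith [(Real.dist_eq _ _).symm.trans_le (hδε x hx y hy hxy)]
  · calc |g x - g y| ≤ ‖g x‖ + ‖g y‖ := abs_sub _ _
      _ ≤ 2 * M := by linarith [hM x hx, hM y hy]
      _ ≤ 2 * M / δ * dist x y := by
          rw [div_mul_eq_mul_div, le_div_iff₀ hδ]
          exact mul_le_mul_of_nonneg_left hxy.le (by positivity)
      _ ≤ ε + 2 * M / δ * dist x y := le_add_of_nonneg_left hε.le

lemma ApproxLipschitzOn.continuousOn (hg : ApproxLipschitzOn g S) : ContinuousOn g S := by
  refine Metric.continuousOn_iff.2 fun x hx ε hε => ?_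
  obtain ⟨L, hL⟩ := hg (ε / 2) (half_pos hε)
  have hL1 : 0 < |L| + 1 := by positivity
  refine ⟨ε / (2 * (|L| + 1)), by positivity, fun y hy hyx => ?_⟩
  rw [Real.dist_eq]
  calc |g y - g x| ≤ ε / 2 + L * dist y x := hL y hy x hx
    _ ≤ ε / 2 + (|L| + 1) * dist y x := by
        gcongr
        linarith [le_abs_self L]
    _ < ε / 2 + (|L| + 1) * (ε / (2 * (|L| + 1))) := by gcongr
    _ = ε := by field_simp; ring

end ApproxLipschitzOn

lemma dist_update_update_le {ι X : Type*} [Fintype ι] [DecidableEq ι] [PseudoMetricSpace X]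
    (t t' : ι → X) (i : ι) (x y : X) :
    dist (update t i x) (update t' i y) ≤ dist t t' + dist x y := by
  refine (dist_pi_le_iff (by positivity)).2 fun j => ?_
  rcases eq_or_ne j i with rfl | hj
  · simp
  · simpa [update_of_ne hj] using le_add_of_le_of_nonneg (dist_le_pi_dist t t' j) dist_nonneg

section MultiDim

variable {d : ℕ} {F : Fin d → Set ℝ} {g g₁ g₂ : (Fin d → ℝ) → ℝ} {i : Fin d} {t : Fin d → ℝ}

noncomputable def extendCoord (F : Fin d → Set ℝ) (i : Fin d) (g : (Fin d → ℝ) → ℝ)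
    (t : Fin d → ℝ) : ℝ :=
  affExt (F i) (fun v => g (update t i v)) (t i)

noncomputable def extendAll (F : Fin d → Set ℝ) (l : List (Fin d)) (g : (Fin d → ℝ) → ℝ) :
    (Fin d → ℝ) → ℝ :=
  l.foldr (extendCoord F) g

def partialCube (F : Fin d → Set ℝ) (l : List (Fin d)) : Set (Fin d → ℝ) :=
  pi univ fun j => if j ∈ l then Icc (0:ℝ) 1 else F j

def AffineOnGaps (F : Fin d → Set ℝ) (i : Fin d) (g : (Fin d → ℝ) → ℝ) : Prop :=
  ∀ t ∈ cube d, ∀ a b : ℝ, Ioo a b ⊆ Icc (0:ℝ) 1 \ F i →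
    ∃ c e : ℝ, ∀ u ∈ Ioo a b, g (update t i u) = c * u + e

lemma partialCube_nil : partialCube F [] = pi univ F := by
  simp [partialCube]

lemma partialCube_finRange : partialCube F (List.finRange d) = cube d := by
  simp [partialCube, cube]

lemma apply_mem_Icc_of_mem_partialCube_cons {l : List (Fin d)} (ht : t ∈ partialCube F (i :: l)) :
    t i ∈ Icc (0:ℝ) 1 := by
  simpa using ht i (mem_univ i)

lemma update_mem_partialCube (hF : F i ⊆ Icc (0:ℝ) 1) {l : List (Fin d)}
    (ht : t ∈ partialCube F (i :: l)) {v : ℝ} (hv : v ∈ F i) : update t i v ∈ partialCube F l := by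
  intro j _
  rcases eq_or_ne j i with rfl | hj
  · simp only [update_self]
    split_ifs
    exacts [hF hv, hv]
  · simpa [update_of_ne hj, hj] using ht j (mem_univ j)

lemma update_mem_cube (ht : t ∈ cube d) {v : ℝ} (hv : v ∈ Icc (0:ℝ) 1) : update t i v ∈ cube d :=
  (update_mem_pi_iff_of_mem ht).2 fun _ => hv

lemma extendCoord_of_mem (ht : t i ∈ F i) : extendCoord F i g t = g t := by
  simp [extendCoord, affExt, ht]

lemma extendAll_of_mem_pi (ht : t ∈ pi univ F) : ∀ l, extendAll F l g t = g t
  | [] => rfl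
  | i :: l => (extendCoord_of_mem (ht i (mem_univ i))).trans (extendAll_of_mem_pi ht l)

lemma extendCoord_congr (hF : IsClosed (F i)) (h0 : (0:ℝ) ∈ F i) (h1 : (1:ℝ) ∈ F i)
    (ht : t i ∈ Icc (0:ℝ) 1) (h : ∀ v ∈ F i, g₁ (update t i v) = g₂ (update t i v)) :
    extendCoord F i g₁ t = extendCoord F i g₂ t :=
  affExt_congr hF h0 h1 ht h

lemma extendAll_congr (hFsub : ∀ i, F i ⊆ Icc (0:ℝ) 1) (hFc : ∀ i, IsClosed (F i))
    (h0 : ∀ i, (0:ℝ) ∈ F i) (h1 : ∀ i, (1:ℝ) ∈ F i) (h : EqOn g₁ g₂ (pi univ F)) :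
    ∀ l, EqOn (extendAll F l g₁) (extendAll F l g₂) (partialCube F l)
  | [] => by rwa [partialCube_nil]
  | i :: l => fun _ ht =>
    extendCoord_congr (hFc i) (h0 i) (h1 i) (apply_mem_Icc_of_mem_partialCube_cons ht)
      fun _ hv => extendAll_congr hFsub hFc h0 h1 h l (update_mem_partialCube (hFsub i) ht hv)

lemma approxLipschitzOn_extendCoord {S S' : Set (Fin d → ℝ)} (hF : IsClosed (F i))
    (h0 : (0:ℝ) ∈ F i) (h1 : (1:ℝ) ∈ F i) (hS' : ∀ t ∈ S', t i ∈ Icc (0:ℝ) 1)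
    (hSS' : ∀ t ∈ S', ∀ v ∈ F i, update t i v ∈ S) (hg : ApproxLipschitzOn g S) :
    ApproxLipschitzOn (extendCoord F i g) S' := by
  intro ε hε
  obtain ⟨L, hL⟩ := hg (ε / 4) (by positivity)
  have hL' : ∀ x ∈ S, ∀ y ∈ S, |g x - g y| ≤ ε / 4 + |L| * dist x y := fun x hx y hy =>
    (hL x hx y hy).trans (by gcongr; exact le_abs_self L)
  refine ⟨2 * |L|, fun t ht t' ht' => ?_⟩
  have hcut : |extendCoord F i g t - affExt (F i) (fun v => g (update t i v)) (t' i)|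
      ≤ 3 * (ε / 4) + |L| * |t i - t' i| := by
    refine abs_affExt_sub_affExt_le hF h0 h1 (fun x hx y hy => ?_) (by positivity)
      (hS' t ht) (hS' t' ht')
    refine (hL' _ (hSS' t ht x hx) _ (hSS' t ht y hy)).trans ?_
    gcongr
    simpa [Real.dist_eq] using dist_update_update_le t t i x y
  have hparam : |affExt (F i) (fun v => g (update t i v)) (t' i) - extendCoord F i g t'|
      ≤ ε / 4 + |L| * dist t t' := by
    refine abs_affExt_sub_affExt_le_of_le hF h0 h1 (hS' t' ht') fun v hv => ?_
    refine (hL' _ (hSS' t ht v hv) _ (hSS' t' ht' v hv)).trans ?_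
    gcongr
    simpa using dist_update_update_le t t' i v v
  have hi : |L| * |t i - t' i| ≤ |L| * dist t t' := by
    gcongr
    rw [← Real.dist_eq]
    exact dist_le_pi_dist t t' i
  linarith [abs_sub_le (extendCoord F i g t) (affExt (F i) (fun v => g (update t i v)) (t' i))
    (extendCoord F i g t')]

lemma approxLipschitzOn_extendAll (hFsub : ∀ i, F i ⊆ Icc (0:ℝ) 1)
    (hFc : ∀ i, IsClosed (F i)) (h0 : ∀ i, (0:ℝ) ∈ F i) (h1 : ∀ i, (1:ℝ) ∈ F i)
    (hg : ApproxLipschitzOn g (pi univ F)) :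
    ∀ l, ApproxLipschitzOn (extendAll F l g) (partialCube F l)
  | [] => by rwa [partialCube_nil]
  | i :: l => approxLipschitzOn_extendCoord (hFc i) (h0 i) (h1 i)
      (fun _ ht => apply_mem_Icc_of_mem_partialCube_cons ht)
      (fun _ ht _ hv => update_mem_partialCube (hFsub i) ht hv)
      (approxLipschitzOn_extendAll hFsub hFc h0 h1 hg l)

lemma affineOnGaps_extendCoord_self : AffineOnGaps F i (extendCoord F i g) := by
  intro t _ a b hab
  simp only [extendCoord, update_idem, update_self]
  exact exists_affExt_eq_affine_on_Ioo fun v hv => (hab hv).2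

lemma affineOnGaps_extendCoord_of_ne {j : Fin d} (hji : j ≠ i) (hFsub : F j ⊆ Icc (0:ℝ) 1)
    (hF : IsClosed (F j)) (h0 : (0:ℝ) ∈ F j) (h1 : (1:ℝ) ∈ F j) (hg : AffineOnGaps F i g) :
    AffineOnGaps F i (extendCoord F j g) := by
  intro t ht a b hab
  have htj : t j ∈ Icc (0:ℝ) 1 := ht j (mem_univ j)
  obtain ⟨c₁, e₁, H₁⟩ :=
    hg _ (update_mem_cube ht (hFsub (leftN_mem_s9 hF h0 htj.1))) a b hab
  obtain ⟨c₂, e₂, H₂⟩ :=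
    hg _ (update_mem_cube ht (hFsub (rightN_mem_s9 hF h1 htj.2))) a b hab
  set θ := gapWeight (F j) (t j)
  refine ⟨(1 - θ) * c₁ + θ * c₂, (1 - θ) * e₁ + θ * e₂, fun u hu => ?_⟩
  rw [extendCoord, affExt_eq_gapWeight, update_of_ne hji, update_comm hji.symm,
    update_comm hji.symm, H₁ u hu, H₂ u hu]
  ring

lemma affineOnGaps_extendAll (hFsub : ∀ i, F i ⊆ Icc (0:ℝ) 1) (hFc : ∀ i, IsClosed (F i))
    (h0 : ∀ i, (0:ℝ) ∈ F i) (h1 : ∀ i, (1:ℝ) ∈ F i) :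
    ∀ {l : List (Fin d)}, i ∈ l → AffineOnGaps F i (extendAll F l g)
  | j :: l, hi => by
    rcases eq_or_ne j i with rfl | hji
    · exact affineOnGaps_extendCoord_self
    · exact affineOnGaps_extendCoord_of_ne hji (hFsub j) (hFc j) (h0 j) (h1 j)
        (affineOnGaps_extendAll hFsub hFc h0 h1 ((List.mem_cons.1 hi).resolve_left hji.symm))

/-- Continuity pins down the values of an affine cut at the ends of a gap. -/
lemma extendCoord_eq_self (hFsub : F i ⊆ Icc (0:ℝ) 1) (hF : IsClosed (F i))
    (h0 : (0:ℝ) ∈ F i) (h1 : (1:ℝ) ∈ F i) (hg : ContinuousOn g (cube d))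
    (ha : AffineOnGaps F i g) (ht : t ∈ cube d) : extendCoord F i g t = g t := by
  by_cases hti : t i ∈ F i
  · exact extendCoord_of_mem hti
  have hti01 : t i ∈ Icc (0:ℝ) 1 := ht i (mem_univ i)
  have hlF := leftN_mem_s9 hF h0 hti01.1
  have hrF := rightN_mem_s9 hF h1 hti01.2
  set l := leftN (F i) (t i)
  set r := rightN (F i) (t i)
  have hl : l < t i := (leftN_le h0 hti01.1).lt_of_ne fun h => hti (h ▸ hlF)
  have hr : t i < r := (le_rightN h1 hti01.2).lt_of_ne fun h => hti (h ▸ hrF)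
  have hgap : Ioo l r ⊆ Icc (0:ℝ) 1 \ F i := fun v hv =>
    ⟨⟨(hFsub hlF).1.trans hv.1.le, hv.2.le.trans (hFsub hrF).2⟩, notMem_of_mem_Ioo_leftN_rightN hv⟩
  obtain ⟨c, e, hce⟩ := ha t ht l r hgap
  have hcont : ContinuousOn (fun v => g (update t i v)) (Icc l r) :=
    hg.comp (by fun_prop : Continuous (update t i)).continuousOn fun v hv =>
      update_mem_cube ht ⟨(hFsub hlF).1.trans hv.1, hv.2.trans (hFsub hrF).2⟩
  have hEq : EqOn (fun v => g (update t i v)) (fun v => c * v + e) (Icc l r) :=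
    EqOn.of_subset_closure hce hcont (by fun_prop) Ioo_subset_Icc_self
      (closure_Ioo (hl.trans hr).ne).ge
  have hgl : g (update t i l) = c * l + e := hEq (left_mem_Icc.2 (hl.trans hr).le)
  have hgr : g (update t i r) = c * r + e := hEq (right_mem_Icc.2 (hl.trans hr).le)
  calc extendCoord F i g t
      = (1 - gapWeight (F i) (t i)) * (c * l + e) + gapWeight (F i) (t i) * (c * r + e) := by
        rw [extendCoord, affExt_eq_gapWeight, hgl, hgr]
    _ = c * t i + e := by linear_combination c * gapWeight_mul h0 h1 hti01
    _ = g t := by rw [← hce (t i) ⟨hl, hr⟩, update_eq_self]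

lemma extendAll_eq_self (hFsub : ∀ i, F i ⊆ Icc (0:ℝ) 1) (hFc : ∀ i, IsClosed (F i))
    (h0 : ∀ i, (0:ℝ) ∈ F i) (h1 : ∀ i, (1:ℝ) ∈ F i) (hg : ContinuousOn g (cube d))
    (ha : ∀ i, AffineOnGaps F i g) : ∀ l, EqOn (extendAll F l g) g (cube d)
  | [] => fun _ _ => rfl
  | i :: l => fun t ht => by
    have hti : t i ∈ Icc (0:ℝ) 1 := ht i (mem_univ i)
    calc extendAll F (i :: l) g t = extendCoord F i g t :=
          extendCoord_congr (hFc i) (h0 i) (h1 i) hti fun v hv =>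
            extendAll_eq_self hFsub hFc h0 h1 hg ha l (update_mem_cube ht (hFsub i hv))
      _ = g t := extendCoord_eq_self (hFsub i) (hFc i) (h0 i) (h1 i) hg (ha i) ht

end MultiDim

theorem stmt9_general (d : ℕ) (F : Fin d → Set ℝ)
    (hFsub : ∀ i, F i ⊆ Set.Icc (0:ℝ) 1) (hFc : ∀ i, IsClosed (F i))
    (h0 : ∀ i, (0:ℝ) ∈ F i) (h1 : ∀ i, (1:ℝ) ∈ F i)
    (f : (Fin d → ℝ) → ℝ) (hf : ContinuousOn f (Set.pi Set.univ F)) :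
    ∃ g : (Fin d → ℝ) → ℝ,
      (ContinuousOn g (cube d) ∧
        (∀ t ∈ Set.pi Set.univ F, g t = f t) ∧
        (∀ i : Fin d, ∀ t ∈ cube d, ∀ a b : ℝ,
          Set.Ioo a b ⊆ Set.Icc (0:ℝ) 1 \ F i →
          ∃ c e : ℝ, ∀ u ∈ Set.Ioo a b, g (Function.update t i u) = c * u + e)) ∧
      (∀ g' : (Fin d → ℝ) → ℝ,
        (ContinuousOn g' (cube d) ∧
          (∀ t ∈ Set.pi Set.univ F, g' t = f t) ∧
          (∀ i : Fin d, ∀ t ∈ cube d, ∀ a b : ℝ,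
            Set.Ioo a b ⊆ Set.Icc (0:ℝ) 1 \ F i →
            ∃ c e : ℝ, ∀ u ∈ Set.Ioo a b, g' (Function.update t i u) = c * u + e)) →
        ∀ t ∈ cube d, g' t = g t) := by
  have hcompact : IsCompact (pi univ F) :=
    isCompact_univ_pi fun i => isCompact_Icc.of_isClosed_subset (hFc i) (hFsub i)
  refine ⟨extendAll F (List.finRange d) f, ⟨?_, fun t ht => extendAll_of_mem_pi ht _,
    fun i => affineOnGaps_extendAll hFsub hFc h0 h1 (List.mem_finRange i)⟩, ?_⟩
  · rw [← partialCube_finRange]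
    exact (approxLipschitzOn_extendAll hFsub hFc h0 h1
      (hf.approxLipschitzOn hcompact) _).continuousOn
  · rintro g' ⟨hc, he, ha⟩ t ht
    calc g' t = extendAll F (List.finRange d) g' t :=
          (extendAll_eq_self hFsub hFc h0 h1 hc ha _ ht).symm
      _ = extendAll F (List.finRange d) f t :=
          extendAll_congr hFsub hFc h0 h1 he _ (partialCube_finRange ▸ ht)

/-- existence and uniqueness of the multiaffine extension: there is a unique
continuous `g : [0,1]^d → ℝ` equal to `f` on `F = F₁ × ⋯ × F_d` whose one-dimensional cuts
are affine on each interval contained in `[0,1] \ F_i`. -/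
theorem stmt9 (d : ℕ) (hd : 1 ≤ d) (F : Fin d → Set ℝ)
    (hFsub : ∀ i, F i ⊆ Set.Icc (0:ℝ) 1) (hFc : ∀ i, IsClosed (F i))
    (h0 : ∀ i, (0:ℝ) ∈ F i) (h1 : ∀ i, (1:ℝ) ∈ F i)
    (f : (Fin d → ℝ) → ℝ) (hf : ContinuousOn f (Set.pi Set.univ F)) :
    ∃ g : (Fin d → ℝ) → ℝ,
      (ContinuousOn g (cube d) ∧
        (∀ t ∈ Set.pi Set.univ F, g t = f t) ∧
        (∀ i : Fin d, ∀ t ∈ cube d, ∀ a b : ℝ,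
          Set.Ioo a b ⊆ Set.Icc (0:ℝ) 1 \ F i →
          ∃ c e : ℝ, ∀ u ∈ Set.Ioo a b, g (Function.update t i u) = c * u + e)) ∧
      (∀ g' : (Fin d → ℝ) → ℝ,
        (ContinuousOn g' (cube d) ∧
          (∀ t ∈ Set.pi Set.univ F, g' t = f t) ∧
          (∀ i : Fin d, ∀ t ∈ cube d, ∀ a b : ℝ,
            Set.Ioo a b ⊆ Set.Icc (0:ℝ) 1 \ F i →
            ∃ c e : ℝ, ∀ u ∈ Set.Ioo a b, g' (Function.update t i u) = c * u + e)) →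
        ∀ t ∈ cube d, g' t = g t) :=
  stmt9_general d F hFsub hFc h0 h1 f hf
end

section
/- Let F = F₁ × ⋯ × F_d with each F_i ⊆ [0,1] closed containing 0 and 1, and let f : F → ℝ be continuous. The multiaffine extension satisfies the explicit formula: for every t ∈ [0,1]^d, P_{F→[0,1]^d}(f)(t) = Σ_{ε₁,…,ε_d ∈ {−,+}} (∏_{j=1}^d ω_{ε_j}(t_j)) · f(t₁^{ε₁},…,t_d^{ε_d}), where for t_j ∈ F_j one sets t_j^− = t_j^+ = t_j and ω_−(t_j) = ω_+(t_j) = 1/2, and for t_j ∉ F_j, t_j^− and t_j^+ are the closest neighbors of t_j in F_j and ω_+(t_j) = (t_j − t_j^−)/(t_j^+ − t_j^−), ω_−(t_j) = 1 − ω_+(t_j). Moreover the 2^d weights ∏_j ω_{ε_j}(t_j) are non-negative and sum to 1. -/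
open Set
open scoped Classical

/-!
Along a coordinate line through a point of the cube, `g` is continuous and affine on each gap
of `F i`, hence also on the closure of the gap, so `g t` is the convex combination
`ω₋ g(t⁻) + ω₊ g(t⁺)` of its values at the two neighbors of `t i` in `F i`. Expanding every
coordinate in turn gives the `2^d`-term formula; its weights are products of the
one-dimensional pairs `ω₋ + ω₊ = 1`, whence they sum to one.
-/

section Neighbors

variable {B : Set ℝ} {t : ℝ}

lemma leftN_le_s10 (h0 : (0 : ℝ) ∈ B) (ht : 0 ≤ t) : leftN B t ≤ t :=
  csSup_le ⟨0, h0, ht⟩ fun _ hu => hu.2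

lemma le_rightN_s10 (h1 : (1 : ℝ) ∈ B) (ht : t ≤ 1) : t ≤ rightN B t :=
  le_csInf ⟨1, h1, ht⟩ fun _ hu => hu.2

lemma isGreatest_leftN (hB : IsClosed B) (h0 : (0 : ℝ) ∈ B) (ht : 0 ≤ t) :
    IsGreatest {u ∈ B | u ≤ t} (leftN B t) :=
  (hB.inter isClosed_Iic).isGreatest_csSup ⟨0, h0, ht⟩ ⟨t, fun _ hu => hu.2⟩

lemma isLeast_rightN (hB : IsClosed B) (h1 : (1 : ℝ) ∈ B) (ht : t ≤ 1) :
    IsLeast {u ∈ B | t ≤ u} (rightN B t) :=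
  (hB.inter isClosed_Ici).isLeast_csInf ⟨1, h1, ht⟩ ⟨t, fun _ hu => hu.2⟩

lemma nonneg_leftN (h0 : (0 : ℝ) ∈ B) (ht : 0 ≤ t) : 0 ≤ leftN B t :=
  le_csSup ⟨t, fun _ hu => hu.2⟩ ⟨h0, ht⟩

lemma rightN_le_one (h1 : (1 : ℝ) ∈ B) (ht : t ≤ 1) : rightN B t ≤ 1 :=
  csInf_le ⟨t, fun _ hu => hu.2⟩ ⟨h1, ht⟩

lemma notMem_of_mem_Ioo_leftN_rightN_s10 {u : ℝ} (hB : IsClosed B)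
    (h0 : (0 : ℝ) ∈ B) (h1 : (1 : ℝ) ∈ B) (ht : t ∈ Icc (0 : ℝ) 1)
    (hu : u ∈ Ioo (leftN B t) (rightN B t)) : u ∉ B := by
  intro huB
  rcases le_total u t with hut | htu
  · exact hu.1.not_ge ((isGreatest_leftN hB h0 ht.1).2 ⟨huB, hut⟩)
  · exact hu.2.not_ge ((isLeast_rightN hB h1 ht.2).2 ⟨huB, htu⟩)

lemma nbr_of_mem (ht : t ∈ B) (b : Bool) : nbr B t b = t := if_pos ht

lemma nbr_mem (hB : IsClosed B) (h0 : (0 : ℝ) ∈ B) (h1 : (1 : ℝ) ∈ B)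
    (ht : t ∈ Icc (0 : ℝ) 1) (b : Bool) : nbr B t b ∈ B := by
  unfold nbr
  split_ifs with htB
  exacts [htB, (isLeast_rightN hB h1 ht.2).1.1, (isGreatest_leftN hB h0 ht.1).1.1]

lemma nbr_mem_Icc (h0 : (0 : ℝ) ∈ B) (h1 : (1 : ℝ) ∈ B)
    (ht : t ∈ Icc (0 : ℝ) 1) (b : Bool) : nbr B t b ∈ Icc (0 : ℝ) 1 := by
  unfold nbr
  split_ifs
  exacts [ht, ⟨ht.1.trans (le_rightN_s10 h1 ht.2), rightN_le_one h1 ht.2⟩,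
    ⟨nonneg_leftN h0 ht.1, (leftN_le_s10 h0 ht.1).trans ht.2⟩]

lemma wt_false_add_wt_true : wt B t false + wt B t true = 1 := by
  by_cases h : t ∈ B <;> simp only [wt, h, if_true, if_false, Bool.false_eq_true] <;> ring

lemma wt_nonneg (h0 : (0 : ℝ) ∈ B) (h1 : (1 : ℝ) ∈ B)
    (ht : t ∈ Icc (0 : ℝ) 1) (b : Bool) : 0 ≤ wt B t b := by
  have hl := leftN_le_s10 h0 ht.1
  have hr := le_rightN_s10 h1 ht.2
  have hw0 : 0 ≤ (t - leftN B t) / (rightN B t - leftN B t) := by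
    apply div_nonneg <;> linarith
  have hw1 : (t - leftN B t) / (rightN B t - leftN B t) ≤ 1 := by
    apply div_le_one_of_le₀ <;> linarith
  unfold wt
  split_ifs <;> linarith

end Neighbors

lemma eqOn_Icc_of_eqOn_Ioo {φ ψ : ℝ → ℝ} {a b : ℝ} (hab : a < b) (hφ : ContinuousOn φ (Icc a b))
    (hψ : Continuous ψ) (h : EqOn φ ψ (Ioo a b)) : EqOn φ ψ (Icc a b) :=
  h.of_subset_closure hφ hψ.continuousOn Ioo_subset_Icc_self (closure_Ioo hab.ne).ge

lemma eq_sum_wt_mul_nbr {B : Set ℝ} (hB : IsClosed B) (h0 : (0 : ℝ) ∈ B) (h1 : (1 : ℝ) ∈ B)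
    {φ : ℝ → ℝ} (hφ : ContinuousOn φ (Icc 0 1))
    (hcut : ∀ a b : ℝ, Ioo a b ⊆ Icc (0 : ℝ) 1 \ B →
      ∃ c e : ℝ, ∀ u ∈ Ioo a b, φ u = c * u + e)
    {x : ℝ} (hx : x ∈ Icc (0 : ℝ) 1) :
    φ x = ∑ b : Bool, wt B x b * φ (nbr B x b) := by
  by_cases hxB : x ∈ B
  · simp only [Fintype.sum_bool, wt, nbr, if_pos hxB]
    ring
  set a := leftN B x
  set b := rightN B x
  have hax : a < x := (leftN_le_s10 h0 hx.1).lt_of_ne fun h =>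
    hxB (h ▸ (isGreatest_leftN hB h0 hx.1).1.1)
  have hxb : x < b := (le_rightN_s10 h1 hx.2).lt_of_ne' fun h =>
    hxB (h ▸ (isLeast_rightN hB h1 hx.2).1.1)
  have hgap : Ioo a b ⊆ Icc (0 : ℝ) 1 \ B := fun u hu =>
    ⟨⟨(nonneg_leftN h0 hx.1).trans hu.1.le, hu.2.le.trans (rightN_le_one h1 hx.2)⟩,
      notMem_of_mem_Ioo_leftN_rightN_s10 hB h0 h1 hx hu⟩
  obtain ⟨c, e, hce⟩ := hcut a b hgap
  have haff : EqOn φ (fun u => c * u + e) (Icc a b) :=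
    eqOn_Icc_of_eqOn_Ioo (hax.trans hxb)
      (hφ.mono (Icc_subset_Icc (nonneg_leftN h0 hx.1) (rightN_le_one h1 hx.2)))
      (by fun_prop) hce
  have hba : b - a ≠ 0 := by linarith
  simp only [Fintype.sum_bool, wt, nbr, if_neg hxB, if_true, Bool.false_eq_true, if_false]
  change φ x = (x - a) / (b - a) * φ b + (1 - (x - a) / (b - a)) * φ a
  rw [haff ⟨hax.le, hxb.le⟩, haff ⟨le_rfl, (hax.trans hxb).le⟩, haff ⟨(hax.trans hxb).le, le_rfl⟩]
  field_simp
  ring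

lemma update_mem_cube_s10 {d : ℕ} {p : Fin d → ℝ} (hp : p ∈ cube d) (i : Fin d) {u : ℝ}
    (hu : u ∈ Icc (0 : ℝ) 1) : Function.update p i u ∈ cube d :=
  (update_mem_pi_iff_of_mem hp).2 fun _ => hu

lemma eq_sum_wt_mul_update {d : ℕ} {B : Set ℝ} (hB : IsClosed B) (h0 : (0 : ℝ) ∈ B)
    (h1 : (1 : ℝ) ∈ B) {g : (Fin d → ℝ) → ℝ} (hg : ContinuousOn g (cube d))
    {p : Fin d → ℝ} (hp : p ∈ cube d) (i : Fin d)
    (hcut : ∀ a b : ℝ, Ioo a b ⊆ Icc (0 : ℝ) 1 \ B →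
      ∃ c e : ℝ, ∀ u ∈ Ioo a b, g (Function.update p i u) = c * u + e) :
    g p = ∑ b : Bool, wt B (p i) b * g (Function.update p i (nbr B (p i) b)) := by
  have hφ : ContinuousOn (fun u => g (Function.update p i u)) (Icc 0 1) :=
    hg.comp (continuous_const.update i continuous_id (f := fun _ : ℝ => p)).continuousOn
      fun _ hu => update_mem_cube_s10 hp i hu
  simpa only [Function.update_eq_self] using
    eq_sum_wt_mul_nbr hB h0 h1 hφ hcut (hp i (mem_univ i))

lemma sum_sum_eq_sum_sum_update {ι β M : Type*} [Fintype ι] [DecidableEq ι] [Fintype β]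
    [AddCommMonoid M] (i : ι) (c : (ι → β) → β → M) :
    ∑ x : ι → β, ∑ b, c x b = ∑ x : ι → β, ∑ b, c (Function.update x i b) (x i) := by
  have hinv : Function.Involutive fun p : (ι → β) × β => (Function.update p.1 i p.2, p.1 i) := by
    intro p
    simp
  simp only [← Fintype.sum_prod_type']
  exact Fintype.sum_bijective _ hinv.bijective _ _ fun p => by simp

section MultiExt

variable {d : ℕ}

/-- The vertex `(t₁^{ε₁}, …, t_d^{ε_d})` of the box of neighbors of `t`. -/
noncomputable def vertex (F : Fin d → Set ℝ) (t : Fin d → ℝ) (ε : Fin d → Bool) : Fin d → ℝ :=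
  fun j => nbr (F j) (t j) (ε j)

noncomputable def vertexWt (F : Fin d → Set ℝ) (t : Fin d → ℝ) (ε : Fin d → Bool) : ℝ :=
  ∏ j, wt (F j) (t j) (ε j)

lemma multiExt_eq (F : Fin d → Set ℝ) (f : (Fin d → ℝ) → ℝ) (t : Fin d → ℝ) :
    multiExt F f t = ∑ ε, vertexWt F t ε * f (vertex F t ε) := rfl

lemma sum_vertexWt (F : Fin d → Set ℝ) (t : Fin d → ℝ) : ∑ ε, vertexWt F t ε = 1 := by
  simp only [vertexWt, ← Fintype.prod_sum, Fintype.sum_bool, add_comm (wt _ _ true),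
    wt_false_add_wt_true, Finset.prod_const_one]

lemma multiExt_of_mem {F : Fin d → Set ℝ} {t : Fin d → ℝ} (ht : ∀ j, t j ∈ F j)
    (f : (Fin d → ℝ) → ℝ) : multiExt F f t = f t := by
  have hv : ∀ ε, vertex F t ε = t := fun ε => funext fun j => nbr_of_mem (ht j) (ε j)
  simp only [multiExt_eq, hv, ← Finset.sum_mul, sum_vertexWt, one_mul]

lemma vertex_mem_pi {F : Fin d → Set ℝ} (hF : ∀ j, IsClosed (F j)) (h0 : ∀ j, (0 : ℝ) ∈ F j)
    (h1 : ∀ j, (1 : ℝ) ∈ F j) {t : Fin d → ℝ} (ht : t ∈ cube d) (ε : Fin d → Bool) :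
    vertex F t ε ∈ pi univ F :=
  fun j _ => nbr_mem (hF j) (h0 j) (h1 j) (ht j (mem_univ j)) (ε j)

lemma vertex_mem_cube {F : Fin d → Set ℝ} (h0 : ∀ j, (0 : ℝ) ∈ F j) (h1 : ∀ j, (1 : ℝ) ∈ F j)
    {t : Fin d → ℝ} (ht : t ∈ cube d) (ε : Fin d → Bool) : vertex F t ε ∈ cube d :=
  fun j _ => nbr_mem_Icc (h0 j) (h1 j) (ht j (mem_univ j)) (ε j)

lemma update_vertex (F : Fin d → Set ℝ) (t : Fin d → ℝ) (ε : Fin d → Bool) (i : Fin d)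
    (B : Set ℝ) (b : Bool) :
    Function.update (vertex F t ε) i (nbr B (t i) b) =
      vertex (Function.update F i B) t (Function.update ε i b) := by
  funext j
  rcases eq_or_ne j i with rfl | hj
  · simp [vertex]
  · simp [vertex, hj]

lemma vertexWt_update_set (F : Fin d → Set ℝ) (t : Fin d → ℝ) (ε : Fin d → Bool) (i : Fin d)
    (B : Set ℝ) :
    vertexWt (Function.update F i B) t ε * wt (F i) (t i) (ε i) =
      vertexWt F t ε * wt B (t i) (ε i) := by
  simp only [vertexWt, ← Finset.mul_prod_erase _ _ (Finset.mem_univ i), Function.update_self]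
  have hrest : ∏ j ∈ Finset.univ.erase i, wt (Function.update F i B j) (t j) (ε j) =
      ∏ j ∈ Finset.univ.erase i, wt (F j) (t j) (ε j) :=
    Finset.prod_congr rfl fun j hj => by rw [Function.update_of_ne (Finset.ne_of_mem_erase hj)]
  rw [hrest]
  ring

lemma vertexWt_update_of_mem {F : Fin d → Set ℝ} {t : Fin d → ℝ} {i : Fin d} (hti : t i ∈ F i)
    (ε : Fin d → Bool) (b : Bool) : vertexWt F t (Function.update ε i b) = vertexWt F t ε := by
  refine Finset.prod_congr rfl fun j _ => ?_
  rcases eq_or_ne j i with rfl | hj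
  · simp only [wt, if_pos hti]
  · rw [Function.update_of_ne hj]

lemma multiExt_update_of_mem {F : Fin d → Set ℝ} {t : Fin d → ℝ} {i : Fin d} (hti : t i ∈ F i)
    (B : Set ℝ) {h : (Fin d → ℝ) → ℝ}
    (hh : ∀ ε, h (vertex F t ε) =
      ∑ b : Bool, wt B (t i) b * h (Function.update (vertex F t ε) i (nbr B (t i) b))) :
    multiExt F h t = multiExt (Function.update F i B) h t := by
  have hwt : ∀ ε, wt (F i) (t i) ε = 1 / 2 := fun _ => if_pos hti
  calc multiExt F h t
      = ∑ ε, ∑ b, vertexWt F t ε * wt B (t i) b *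
          h (vertex (Function.update F i B) t (Function.update ε i b)) := by
        simp only [multiExt_eq, hh, update_vertex, Finset.mul_sum, mul_assoc]
    _ = ∑ ε, ∑ b, vertexWt F t (Function.update ε i b) * wt B (t i) (ε i) *
          h (vertex (Function.update F i B) t ε) := by
        rw [sum_sum_eq_sum_sum_update i]
        simp
    _ = ∑ ε, 2 * (vertexWt F t ε * wt B (t i) (ε i)) * h (vertex (Function.update F i B) t ε) := by
        simp only [vertexWt_update_of_mem hti, Fintype.sum_bool]
        congr! 1
        ring
    _ = multiExt (Function.update F i B) h t := by
        simp only [← vertexWt_update_set, hwt, multiExt_eq]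
        congr! 1
        ring

/-- Coordinates outside `s` carry the set `[0,1]`, which contains `t j`: the formula then keeps
`t j` with weights `1/2, 1/2`, i.e. that coordinate is not yet expanded. -/
lemma eq_multiExt_piecewise {F : Fin d → Set ℝ} (hF : ∀ i, IsClosed (F i))
    (h0 : ∀ i, (0 : ℝ) ∈ F i) (h1 : ∀ i, (1 : ℝ) ∈ F i) {g : (Fin d → ℝ) → ℝ}
    (hg : ContinuousOn g (cube d))
    (hcut : ∀ i : Fin d, ∀ p ∈ cube d, ∀ a b : ℝ, Ioo a b ⊆ Icc (0 : ℝ) 1 \ F i →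
      ∃ c e : ℝ, ∀ u ∈ Ioo a b, g (Function.update p i u) = c * u + e)
    {t : Fin d → ℝ} (ht : t ∈ cube d) (s : Finset (Fin d)) :
    g t = multiExt (s.piecewise F fun _ => Icc 0 1) g t := by
  induction s using Finset.induction_on with
  | empty => rw [Finset.piecewise_empty, multiExt_of_mem fun j => ht j (mem_univ j)]
  | insert i s hi ih =>
    set G := s.piecewise F fun _ => Icc (0 : ℝ) 1
    have hG0 : ∀ j, (0 : ℝ) ∈ G j := fun j =>
      s.piecewise_cases _ _ (fun B => (0 : ℝ) ∈ B) (h0 j) ⟨le_rfl, zero_le_one⟩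
    have hG1 : ∀ j, (1 : ℝ) ∈ G j := fun j =>
      s.piecewise_cases _ _ (fun B => (1 : ℝ) ∈ B) (h1 j) ⟨zero_le_one, le_rfl⟩
    have hti : t i ∈ G i := by
      rw [show G i = Icc 0 1 from Finset.piecewise_eq_of_notMem _ _ _ hi]
      exact ht i (mem_univ i)
    rw [Finset.piecewise_insert, ← multiExt_update_of_mem hti]
    · exact ih
    intro ε
    have hv := vertex_mem_cube hG0 hG1 ht ε
    have hvi : vertex G t ε i = t i := nbr_of_mem hti (ε i)
    simpa only [hvi] using eq_sum_wt_mul_update (hF i) (h0 i) (h1 i) hg hv i (hcut i _ hv)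

end MultiExt

theorem stmt10_general (d : ℕ) (F : Fin d → Set ℝ)
    (hFc : ∀ i, IsClosed (F i))
    (h0 : ∀ i, (0:ℝ) ∈ F i) (h1 : ∀ i, (1:ℝ) ∈ F i)
    (f : (Fin d → ℝ) → ℝ)
    (g : (Fin d → ℝ) → ℝ)
    (hgcont : ContinuousOn g (cube d))
    (hgf : ∀ t ∈ Set.pi Set.univ F, g t = f t)
    (hcut : ∀ i : Fin d, ∀ t ∈ cube d, ∀ a b : ℝ,
      Set.Ioo a b ⊆ Set.Icc (0:ℝ) 1 \ F i →
      ∃ c e : ℝ, ∀ u ∈ Set.Ioo a b, g (Function.update t i u) = c * u + e) :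
    ∀ t ∈ cube d,
      g t = multiExt F f t ∧
      (∀ ε : Fin d → Bool, 0 ≤ ∏ j, wt (F j) (t j) (ε j)) ∧
      (∑ ε : Fin d → Bool, ∏ j, wt (F j) (t j) (ε j)) = 1 := by
  intro t ht
  refine ⟨?_, fun ε => Finset.prod_nonneg fun j _ =>
    wt_nonneg (h0 j) (h1 j) (ht j (mem_univ j)) (ε j), sum_vertexWt F t⟩
  calc g t = multiExt F g t := by
        simpa only [Finset.piecewise_univ] using
          eq_multiExt_piecewise hFc h0 h1 hgcont hcut ht Finset.univ
    _ = multiExt F f t := by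
        simp only [multiExt_eq]
        exact Finset.sum_congr rfl fun ε _ => by rw [hgf _ (vertex_mem_pi hFc h0 h1 ht ε)]

/-- the multiaffine extension (i.e., any continuous extension of `f` with
affine one-dimensional cuts off `F`) is given by the explicit weighted-vertex formula,
whose `2^d` weights are non-negative and sum to one. -/
theorem stmt10 (d : ℕ) (hd : 1 ≤ d) (F : Fin d → Set ℝ)
    (hFsub : ∀ i, F i ⊆ Set.Icc (0:ℝ) 1) (hFc : ∀ i, IsClosed (F i))
    (h0 : ∀ i, (0:ℝ) ∈ F i) (h1 : ∀ i, (1:ℝ) ∈ F i)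
    (f : (Fin d → ℝ) → ℝ) (hf : ContinuousOn f (Set.pi Set.univ F))
    (g : (Fin d → ℝ) → ℝ)
    (hgcont : ContinuousOn g (cube d))
    (hgf : ∀ t ∈ Set.pi Set.univ F, g t = f t)
    (hcut : ∀ i : Fin d, ∀ t ∈ cube d, ∀ a b : ℝ,
      Set.Ioo a b ⊆ Set.Icc (0:ℝ) 1 \ F i →
      ∃ c e : ℝ, ∀ u ∈ Set.Ioo a b, g (Function.update t i u) = c * u + e) :
    ∀ t ∈ cube d,
      g t = multiExt F f t ∧
      (∀ ε : Fin d → Bool, 0 ≤ ∏ j, wt (F j) (t j) (ε j)) ∧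
      (∑ ε : Fin d → Bool, ∏ j, wt (F j) (t j) (ε j)) = 1 :=
  stmt10_general d F hFc h0 h1 f g hgcont hgf hcut
end

section
/- Let F = F₁ × ⋯ × F_d with each F_i ⊆ [0,1] closed containing 0 and 1, and let f : [0,1]^d → ℝ be continuous and componentwise non-decreasing (f(u) ≤ f(v) whenever u ≤ v coordinatewise). Then the multiaffine extension of the restriction of f to F, P_{F→[0,1]^d}(f|_F), is also componentwise non-decreasing on [0,1]^d. -/
open Set
open scoped Classical

section OneDim
variable {B : Set ℝ}

lemma leftN_bddAbove (t : ℝ) : BddAbove {u ∈ B | u ≤ t} := ⟨t, fun _ hu => hu.2⟩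
lemma rightN_bddBelow (t : ℝ) : BddBelow {u ∈ B | t ≤ u} := ⟨t, fun _ hu => hu.2⟩

lemma leftN_spec (hB : IsClosed B) (h0B : (0:ℝ) ∈ B) {t : ℝ} (ht0 : 0 ≤ t) :
    leftN B t ∈ B ∧ leftN B t ≤ t := by
  have hclosed : IsClosed {u ∈ B | u ≤ t} := by
    have h : {u ∈ B | u ≤ t} = B ∩ Set.Iic t := rfl
    rw [h]; exact hB.inter isClosed_Iic
  exact hclosed.csSup_mem ⟨0, h0B, ht0⟩ (leftN_bddAbove t)

lemma rightN_spec (hB : IsClosed B) (h1B : (1:ℝ) ∈ B) {t : ℝ} (ht1 : t ≤ 1) :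
    rightN B t ∈ B ∧ t ≤ rightN B t := by
  have hclosed : IsClosed {u ∈ B | t ≤ u} := by
    have h : {u ∈ B | t ≤ u} = B ∩ Set.Ici t := rfl
    rw [h]; exact hB.inter isClosed_Ici
  exact hclosed.csInf_mem ⟨1, h1B, ht1⟩ (rightN_bddBelow t)

lemma le_leftN_s14 {t u : ℝ} (hu : u ∈ B) (hut : u ≤ t) : u ≤ leftN B t :=
  le_csSup (leftN_bddAbove t) ⟨hu, hut⟩

lemma rightN_le_s14 {t u : ℝ} (hu : u ∈ B) (htu : t ≤ u) : rightN B t ≤ u :=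
  csInf_le (rightN_bddBelow t) ⟨hu, htu⟩

lemma leftN_mono (h0B : (0:ℝ) ∈ B) {s s' : ℝ} (hs : 0 ≤ s) (hss : s ≤ s') :
    leftN B s ≤ leftN B s' :=
  csSup_le_csSup (leftN_bddAbove s') ⟨0, h0B, hs⟩ (fun u hu => ⟨hu.1, hu.2.trans hss⟩)

lemma rightN_mono (h1B : (1:ℝ) ∈ B) {s s' : ℝ} (hs' : s' ≤ 1) (hss : s ≤ s') :
    rightN B s ≤ rightN B s' :=
  csInf_le_csInf (rightN_bddBelow s) ⟨1, h1B, hs'⟩ (fun u hu => ⟨hu.1, hss.trans hu.2⟩)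

lemma gap (hB : IsClosed B) (h0B : (0:ℝ) ∈ B) {t u : ℝ} (hu : u ∈ B)
    (hlt : leftN B t < u) : rightN B t ≤ u := by
  rcases le_or_gt u t with h | h
  · exact absurd (le_leftN_s14 hu h) (not_le.2 hlt)
  · exact rightN_le_s14 hu h.le

-- basic structure in the non-membership case
lemma notMem_facts (hB : IsClosed B) (h0B : (0:ℝ) ∈ B) (h1B : (1:ℝ) ∈ B)
    {t : ℝ} (ht : t ∈ Set.Icc (0:ℝ) 1) (htB : t ∉ B) :
    leftN B t < t ∧ t < rightN B t := by
  have hl := leftN_spec hB h0B ht.1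
  have hr := rightN_spec hB h1B ht.2
  constructor
  · rcases hl.2.lt_or_eq with h | h
    · exact h
    · exact absurd (h ▸ hl.1) htB
  · rcases hr.2.lt_or_eq with h | h
    · exact h
    · exact absurd (h ▸ hr.1) htB

lemma wt_nonneg_s14 (hB : IsClosed B) (h0B : (0:ℝ) ∈ B) (h1B : (1:ℝ) ∈ B)
    {t : ℝ} (ht : t ∈ Set.Icc (0:ℝ) 1) (b : Bool) : 0 ≤ wt B t b := by
  by_cases htB : t ∈ B
  · simp [wt, htB]
  · obtain ⟨hl, hr⟩ := notMem_facts hB h0B h1B ht htB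
    have hlr : (0:ℝ) < rightN B t - leftN B t := by linarith
    have hlam0 : 0 ≤ (t - leftN B t) / (rightN B t - leftN B t) :=
      div_nonneg (by linarith) hlr.le
    have hlam1 : (t - leftN B t) / (rightN B t - leftN B t) ≤ 1 := by
      rw [div_le_one hlr]; linarith
    cases b <;> simp [wt, htB] <;> linarith

/-- the one-dimensional two-point combination -/
noncomputable def twoPt (B : Set ℝ) (g : ℝ → ℝ) (s : ℝ) : ℝ :=
  wt B s false * g (nbr B s false) + wt B s true * g (nbr B s true)

lemma twoPt_of_mem (g : ℝ → ℝ) {s : ℝ} (hs : s ∈ B) : twoPt B g s = g s := by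
  simp [twoPt, wt, nbr, hs]; ring

lemma twoPt_of_notMem (g : ℝ → ℝ) {s : ℝ} (hs : s ∉ B) :
    twoPt B g s = (1 - (s - leftN B s) / (rightN B s - leftN B s)) * g (leftN B s)
      + (s - leftN B s) / (rightN B s - leftN B s) * g (rightN B s) := by
  simp [twoPt, wt, nbr, hs]

lemma twoPt_mono (hB : IsClosed B) (hBsub : B ⊆ Set.Icc 0 1)
    (h0B : (0:ℝ) ∈ B) (h1B : (1:ℝ) ∈ B) (g : ℝ → ℝ)
    (hg : ∀ u ∈ Set.Icc (0:ℝ) 1, ∀ v ∈ Set.Icc (0:ℝ) 1, u ≤ v → g u ≤ g v)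
    {s s' : ℝ} (hs : s ∈ Set.Icc (0:ℝ) 1) (hs' : s' ∈ Set.Icc (0:ℝ) 1) (hss : s ≤ s') :
    twoPt B g s ≤ twoPt B g s' := by
  -- bounds lemmas, stated inline
  have bounds : ∀ x ∈ Set.Icc (0:ℝ) 1, x ∉ B →
      g (leftN B x) ≤ twoPt B g x ∧ twoPt B g x ≤ g (rightN B x) := by
    intro x hx hxB
    obtain ⟨hl, hr⟩ := notMem_facts hB h0B h1B hx hxB
    have hlmem := (leftN_spec hB h0B hx.1).1
    have hrmem := (rightN_spec hB h1B hx.2).1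
    have hglr : g (leftN B x) ≤ g (rightN B x) :=
      hg _ (hBsub hlmem) _ (hBsub hrmem) (by linarith)
    have hlr : (0:ℝ) < rightN B x - leftN B x := by linarith
    have hlam0 : 0 ≤ (x - leftN B x) / (rightN B x - leftN B x) :=
      div_nonneg (by linarith) hlr.le
    have hlam1 : (x - leftN B x) / (rightN B x - leftN B x) ≤ 1 := by
      rw [div_le_one hlr]; linarith
    rw [twoPt_of_notMem g hxB]
    constructor <;> nlinarith
  by_cases hsB : s ∈ B <;> by_cases hs'B : s' ∈ B
  · rw [twoPt_of_mem g hsB, twoPt_of_mem g hs'B]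
    exact hg _ hs _ hs' hss
  · rw [twoPt_of_mem g hsB]
    have h1 : s ≤ leftN B s' := le_leftN_s14 hsB hss
    have h2 := (bounds s' hs' hs'B).1
    have hlmem := (leftN_spec hB h0B hs'.1).1
    exact le_trans (hg _ hs _ (hBsub hlmem) h1) h2
  · rw [twoPt_of_mem g hs'B]
    have h1 : rightN B s ≤ s' := rightN_le_s14 hs'B hss
    have h2 := (bounds s hs hsB).2
    have hrmem := (rightN_spec hB h1B hs.2).1
    exact le_trans h2 (hg _ (hBsub hrmem) _ hs' h1)
  · rcases le_or_gt (rightN B s) s' with hcase | hcase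
    · -- different gaps
      have hrmem := (rightN_spec hB h1B hs.2).1
      have hlmem' := (leftN_spec hB h0B hs'.1).1
      have h1 : rightN B s ≤ leftN B s' := le_leftN_s14 hrmem hcase
      calc twoPt B g s ≤ g (rightN B s) := (bounds s hs hsB).2
        _ ≤ g (leftN B s') := hg _ (hBsub hrmem) _ (hBsub hlmem') h1
        _ ≤ twoPt B g s' := (bounds s' hs' hs'B).1
    · -- same gap
      obtain ⟨hlt, hrt⟩ := notMem_facts hB h0B h1B hs hsB
      have hlmem := (leftN_spec hB h0B hs.1).1
      have hrmem := (rightN_spec hB h1B hs.2).1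
      have hlmem' := (leftN_spec hB h0B hs'.1).1
      have hleq : leftN B s' = leftN B s := by
        refine le_antisymm ?_ (leftN_mono h0B hs.1 hss)
        by_contra hcon
        push_neg at hcon
        have hgp := gap hB h0B hlmem' hcon
        have hle' := (leftN_spec hB h0B hs'.1).2
        linarith
      have hreq : rightN B s' = rightN B s :=
        le_antisymm (rightN_le_s14 hrmem hcase.le) (rightN_mono h1B hs'.2 hss)
      rw [twoPt_of_notMem g hsB, twoPt_of_notMem g hs'B, hleq, hreq]
      have hlr : (0:ℝ) < rightN B s - leftN B s := by linarith
      have hglr : g (leftN B s) ≤ g (rightN B s) :=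
        hg _ (hBsub hlmem) _ (hBsub hrmem) (by linarith)
      have hlam : (s - leftN B s) / (rightN B s - leftN B s)
          ≤ (s' - leftN B s) / (rightN B s - leftN B s) :=
        (div_le_div_iff_of_pos_right hlr).2 (by linarith)
      nlinarith [mul_nonneg (sub_nonneg.2 hlam) (sub_nonneg.2 hglr)]
end OneDim

lemma multiExt_update_repr {d : ℕ} (F : Fin d → Set ℝ) (f : (Fin d → ℝ) → ℝ)
    (t : Fin d → ℝ) (i : Fin d) (s : ℝ) :
    multiExt F f (Function.update t i s) =
      2⁻¹ * ∑ ε : Fin d → Bool,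
        (∏ j ∈ Finset.univ.erase i, wt (F j) (t j) (ε j)) *
          twoPt (F i) (fun x => f (Function.update (fun j => nbr (F j) (t j) (ε j)) i x)) s := by
  classical
  set A : (Fin d → Bool) → ℝ := fun ε =>
    (∏ j, wt (F j) (Function.update t i s j) (ε j)) *
      f (fun j => nbr (F j) (Function.update t i s j) (ε j)) with hA
  have hterm : ∀ (ε : Fin d → Bool),
      A ε = wt (F i) s (ε i) * ((∏ j ∈ Finset.univ.erase i, wt (F j) (t j) (ε j)) *
        f (Function.update (fun j => nbr (F j) (t j) (ε j)) i (nbr (F i) s (ε i)))) := by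
    intro ε
    have hprod : (∏ j, wt (F j) (Function.update t i s j) (ε j)) =
        wt (F i) s (ε i) * ∏ j ∈ Finset.univ.erase i, wt (F j) (t j) (ε j) := by
      rw [← Finset.mul_prod_erase Finset.univ
        (fun j => wt (F j) (Function.update t i s j) (ε j)) (Finset.mem_univ i)]
      congr 1
      · rw [Function.update_self]
      · exact Finset.prod_congr rfl (fun j hj => by
          rw [Function.update_of_ne (Finset.ne_of_mem_erase hj)])
    have harg : (fun j => nbr (F j) (Function.update t i s j) (ε j)) =
        Function.update (fun j => nbr (F j) (t j) (ε j)) i (nbr (F i) s (ε i)) := by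
      funext j
      by_cases hj : j = i
      · subst hj; rw [Function.update_self, Function.update_self]
      · rw [Function.update_of_ne hj, Function.update_of_ne hj]
    rw [hA]; dsimp only; rw [hprod, harg]; ring
  have hinv : Function.Involutive
      (fun ε : Fin d → Bool => Function.update ε i (!ε i)) := by
    intro ε
    funext j
    by_cases hj : j = i
    · subst hj; simp
    · simp [Function.update_of_ne hj]
  have hflip : ∑ ε : Fin d → Bool, A (Function.update ε i (!ε i)) = ∑ ε, A ε :=
    Equiv.sum_comp (hinv.toPerm _) A
  have h2 : (2:ℝ) * multiExt F f (Function.update t i s) =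
      ∑ ε : Fin d → Bool, (A ε + A (Function.update ε i (!ε i))) := by
    rw [Finset.sum_add_distrib, hflip, multiExt, two_mul]
  have hpair : ∀ (ε : Fin d → Bool),
      A ε + A (Function.update ε i (!ε i)) =
        (∏ j ∈ Finset.univ.erase i, wt (F j) (t j) (ε j)) *
          twoPt (F i) (fun x => f (Function.update (fun j => nbr (F j) (t j) (ε j)) i x)) s := by
    intro ε
    have h1 := hterm ε
    have h2' := hterm (Function.update ε i (!ε i))
    have hupi : Function.update ε i (!ε i) i = !ε i := Function.update_self i _ ε
    have hbase : ∀ x : ℝ,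
        Function.update (fun j => nbr (F j) (t j) (Function.update ε i (!ε i) j)) i x
          = Function.update (fun j => nbr (F j) (t j) (ε j)) i x := by
      intro x
      funext j
      by_cases hj : j = i
      · subst hj; rw [Function.update_self, Function.update_self]
      · rw [Function.update_of_ne hj, Function.update_of_ne hj,
          Function.update_of_ne hj]
    have hW : (∏ j ∈ Finset.univ.erase i, wt (F j) (t j) (Function.update ε i (!ε i) j)) =
        ∏ j ∈ Finset.univ.erase i, wt (F j) (t j) (ε j) :=
      Finset.prod_congr rfl (fun j hj => by
        rw [Function.update_of_ne (Finset.ne_of_mem_erase hj)])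
    rw [h1, h2', hupi, hW, hbase]
    simp only [twoPt]
    cases hε : ε i <;> simp only [hε, Bool.not_false, Bool.not_true] <;> ring
  calc multiExt F f (Function.update t i s)
      = 2⁻¹ * ((2:ℝ) * multiExt F f (Function.update t i s)) := by ring
    _ = _ := by rw [h2]; congr 1; exact Finset.sum_congr rfl (fun ε _ => hpair ε)

lemma multiExt_step {d : ℕ} (F : Fin d → Set ℝ)
    (hFsub : ∀ i, F i ⊆ Set.Icc (0:ℝ) 1) (hFc : ∀ i, IsClosed (F i))
    (h0 : ∀ i, (0:ℝ) ∈ F i) (h1 : ∀ i, (1:ℝ) ∈ F i)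
    (f : (Fin d → ℝ) → ℝ)
    (hmono : ∀ u ∈ cube d, ∀ v ∈ cube d, (∀ j, u j ≤ v j) → f u ≤ f v)
    (t : Fin d → ℝ) (ht : ∀ j, t j ∈ Set.Icc (0:ℝ) 1) (i : Fin d)
    {s s' : ℝ} (hs : s ∈ Set.Icc (0:ℝ) 1) (hs' : s' ∈ Set.Icc (0:ℝ) 1) (hss : s ≤ s') :
    multiExt F f (Function.update t i s) ≤ multiExt F f (Function.update t i s') := by
  rw [multiExt_update_repr, multiExt_update_repr]
  refine mul_le_mul_of_nonneg_left (Finset.sum_le_sum fun ε _ => ?_) (by norm_num)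
  have hbase : ∀ j, nbr (F j) (t j) (ε j) ∈ Set.Icc (0:ℝ) 1 := by
    intro j
    by_cases hj : t j ∈ F j
    · simpa [nbr, hj] using hFsub j hj
    · cases hε : ε j
      · simp only [nbr, hj, if_false, hε]
        exact hFsub j (leftN_spec (hFc j) (h0 j) (ht j).1).1
      · simp only [nbr, hj, if_false, hε, if_true]
        exact hFsub j (rightN_spec (hFc j) (h1 j) (ht j).2).1
  have hW : (0:ℝ) ≤ ∏ j ∈ Finset.univ.erase i, wt (F j) (t j) (ε j) :=
    Finset.prod_nonneg fun j _ => wt_nonneg_s14 (hFc j) (h0 j) (h1 j) (ht j) _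
  refine mul_le_mul_of_nonneg_left ?_ hW
  have hcube : ∀ x ∈ Set.Icc (0:ℝ) 1,
      Function.update (fun j => nbr (F j) (t j) (ε j)) i x ∈ cube d := by
    intro x hx
    intro j _
    by_cases hj : j = i
    · subst hj; rw [Function.update_self]; exact hx
    · rw [Function.update_of_ne hj]; exact hbase j
  refine twoPt_mono (hFc i) (hFsub i) (h0 i) (h1 i) _ ?_ hs hs' hss
  intro a ha b hb hab
  refine hmono _ (hcube a ha) _ (hcube b hb) fun j => ?_
  by_cases hj : j = i
  · subst hj; rw [Function.update_self, Function.update_self]; exact hab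
  · rw [Function.update_of_ne hj, Function.update_of_ne hj]

/-- the multiaffine extension of the restriction to `F` of a continuous
componentwise non-decreasing function is componentwise non-decreasing on `[0,1]^d`. -/
theorem stmt14 (d : ℕ) (hd : 1 ≤ d) (F : Fin d → Set ℝ)
    (hFsub : ∀ i, F i ⊆ Set.Icc (0:ℝ) 1) (hFc : ∀ i, IsClosed (F i))
    (h0 : ∀ i, (0:ℝ) ∈ F i) (h1 : ∀ i, (1:ℝ) ∈ F i)
    (f : (Fin d → ℝ) → ℝ) (hf : ContinuousOn f (cube d))
    (hmono : ∀ u ∈ cube d, ∀ v ∈ cube d, (∀ j, u j ≤ v j) → f u ≤ f v) :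
    ∀ u ∈ cube d, ∀ v ∈ cube d, (∀ j, u j ≤ v j) → multiExt F f u ≤ multiExt F f v := by
  intro u hu v hv huv
  have hu' : ∀ j, u j ∈ Set.Icc (0:ℝ) 1 := fun j => hu j (Set.mem_univ j)
  have hv' : ∀ j, v j ∈ Set.Icc (0:ℝ) 1 := fun j => hv j (Set.mem_univ j)
  have key : ∀ A : Finset (Fin d),
      multiExt F f u ≤ multiExt F f (fun j => if j ∈ A then v j else u j) := by
    intro A
    induction A using Finset.induction_on with
    | empty => simp
    | @insert i A hiA ih =>
      set mid : Fin d → ℝ := fun j => if j ∈ A then v j else u j with hmid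
      have hmidIcc : ∀ j, mid j ∈ Set.Icc (0:ℝ) 1 := by
        intro j
        by_cases hj : j ∈ A <;> simp only [hmid, hj, if_true, if_false]
        · exact hv' j
        · exact hu' j
      have heq1 : mid = Function.update mid i (u i) := by
        funext j
        by_cases hj : j = i
        · subst hj; rw [Function.update_self, hmid]; simp [hiA]
        · rw [Function.update_of_ne hj]
      have heq2 : (fun j => if j ∈ insert i A then v j else u j)
          = Function.update mid i (v i) := by
        funext j
        by_cases hj : j = i
        · subst hj; rw [Function.update_self]; simp
        · rw [Function.update_of_ne hj, hmid]
          simp [Finset.mem_insert, hj]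
      rw [heq2]
      refine le_trans ih ?_
      calc multiExt F f mid = multiExt F f (Function.update mid i (u i)) := by rw [← heq1]
        _ ≤ multiExt F f (Function.update mid i (v i)) :=
          multiExt_step F hFsub hFc h0 h1 f hmono mid hmidIcc i (hu' i) (hv' i) (huv i)
  have := key Finset.univ
  simpa using this
end

section
/- Let F = F₁ × ⋯ × F_d with each F_i ⊆ [0,1] closed containing 0 and 1. If S = S₁ × ⋯ × S_d is a finite grid with S_i ⊆ F_i finite containing 0 and 1, and f : [0,1]^d → ℝ is a componentwise piecewise linear function whose knots for each coordinate i lie in S_i (i.e., f is d-affine on every cell of the grid S), then the multiaffine extension of the restriction of f to F recovers f: P_{F→[0,1]^d}(f|_F) = f on [0,1]^d. -/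
open Set
open scoped Classical

/-!
Fix `t` in the cube and let `a j ≤ t j ≤ b j` be the neighbours of `t j` in `S j`; by hypothesis
`f` is affine in each coordinate on the cell `∏ j, [a j, b j]`. Because `S j ⊆ F j`, the
neighbours `t j ^ ±` of `t j` in `F j` stay in `[a j, b j]`, and the weights `ω_±(t j)` are the
barycentric coordinates of `t j` with respect to them. Summing out one coordinate at a time,
each average `ω_+ g(t^+) + ω_- g(t^-)` of a function affine on `[t^-, t^+]` is its value at `t`.
-/

section Neighbors

variable {B C : Set ℝ} {t x : ℝ}

lemma le_leftN_s19 (hx : x ∈ B) (hxt : x ≤ t) : x ≤ leftN B t :=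
  le_csSup ⟨t, fun _ hu => hu.2⟩ ⟨hx, hxt⟩

lemma rightN_le_s19 (hx : x ∈ B) (htx : t ≤ x) : rightN B t ≤ x :=
  csInf_le ⟨t, fun _ hu => hu.2⟩ ⟨hx, htx⟩

lemma leftN_le_s19 (hx : x ∈ B) (hxt : x ≤ t) : leftN B t ≤ t :=
  csSup_le ⟨x, hx, hxt⟩ fun _ hu => hu.2

lemma le_rightN_s19 (hx : x ∈ B) (htx : t ≤ x) : t ≤ rightN B t :=
  le_csInf ⟨x, hx, htx⟩ fun _ hu => hu.2

lemma leftN_mem_s19 (hB : IsClosed B) (hx : x ∈ B) (hxt : x ≤ t) : leftN B t ∈ B :=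
  ((hB.inter isClosed_Iic).csSup_mem ⟨x, hx, hxt⟩ ⟨t, fun _ hu => hu.2⟩).1

lemma rightN_mem_s19 (hB : IsClosed B) (hx : x ∈ B) (htx : t ≤ x) : rightN B t ∈ B :=
  ((hB.inter isClosed_Ici).csInf_mem ⟨x, hx, htx⟩ ⟨t, fun _ hu => hu.2⟩).1

lemma leftN_lt (hB : IsClosed B) (hx : x ∈ B) (hxt : x ≤ t) (ht : t ∉ B) : leftN B t < t :=
  (leftN_le_s19 hx hxt).lt_of_ne fun h => ht (h ▸ leftN_mem_s19 hB hx hxt)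

lemma lt_rightN (hB : IsClosed B) (hx : x ∈ B) (htx : t ≤ x) (ht : t ∉ B) : t < rightN B t :=
  (le_rightN_s19 hx htx).lt_of_ne fun h => ht (h ▸ rightN_mem_s19 hB hx htx)

lemma leftN_mono_s19 (hBC : B ⊆ C) (hx : x ∈ B) (hxt : x ≤ t) : leftN B t ≤ leftN C t :=
  csSup_le_csSup ⟨t, fun _ hu => hu.2⟩ ⟨x, hx, hxt⟩ fun _ hu => ⟨hBC hu.1, hu.2⟩

lemma rightN_anti (hBC : B ⊆ C) (hx : x ∈ B) (htx : t ≤ x) : rightN C t ≤ rightN B t :=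
  csInf_le_csInf ⟨t, fun _ hu => hu.2⟩ ⟨x, hx, htx⟩ fun _ hu => ⟨hBC hu.1, hu.2⟩

lemma Ioo_leftN_rightN_inter_eq_empty (B : Set ℝ) (t : ℝ) :
    Ioo (leftN B t) (rightN B t) ∩ B = ∅ := by
  refine eq_empty_of_forall_notMem fun u ⟨⟨hlu, hur⟩, hu⟩ => ?_
  rcases le_total u t with h | h
  · exact (le_leftN_s19 hu h).not_gt hlu
  · exact (rightN_le_s19 hu h).not_gt hur

end Neighbors

lemma wt_true_add_wt_false (Fi : Set ℝ) (t : ℝ) : wt Fi t true + wt Fi t false = 1 := by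
  by_cases h : t ∈ Fi <;> simp only [wt, h, if_true, if_false, Bool.false_eq_true] <;> ring

lemma wt_mul_nbr_add_wt_mul_nbr {Fi : Set ℝ} {t x y : ℝ} (hFi : IsClosed Fi)
    (hx : x ∈ Fi) (hxt : x ≤ t) (hy : y ∈ Fi) (hty : t ≤ y) :
    wt Fi t true * nbr Fi t true + wt Fi t false * nbr Fi t false = t := by
  by_cases h : t ∈ Fi
  · simp only [wt, nbr, h, if_true]
    ring
  · have hgap : rightN Fi t - leftN Fi t ≠ 0 :=
      (sub_pos.2 ((leftN_lt hFi hx hxt h).trans (lt_rightN hFi hy hty h))).ne'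
    simp only [wt, nbr, h, if_false, if_true, Bool.false_eq_true]
    field_simp
    ring

lemma nbr_mem_Icc_leftN_rightN {B Fi : Set ℝ} {t x y : ℝ} (hBF : B ⊆ Fi)
    (hx : x ∈ B) (hxt : x ≤ t) (hy : y ∈ B) (hty : t ≤ y) (ε : Bool) :
    nbr Fi t ε ∈ Icc (leftN B t) (rightN B t) := by
  have hl := leftN_le_s19 hx hxt
  have hr := le_rightN_s19 hy hty
  unfold nbr
  split_ifs
  · exact ⟨hl, hr⟩
  · exact ⟨hl.trans (le_rightN_s19 (hBF hy) hty), rightN_anti hBF hy hty⟩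
  · exact ⟨leftN_mono_s19 hBF hx hxt, (leftN_le_s19 (hBF hx) hxt).trans hr⟩

def IsMultiaffineOn {ι : Type*} [DecidableEq ι] (g : (ι → ℝ) → ℝ) (I : ι → Set ℝ) : Prop :=
  ∀ i, ∀ x ∈ Set.pi univ I, ∃ c e : ℝ, ∀ u ∈ I i, g (Function.update x i u) = c * u + e

namespace IsMultiaffineOn

lemma sum_bool_mul_update {ι : Type*} [DecidableEq ι] {g : (ι → ℝ) → ℝ} {I : ι → Set ℝ}
    (hg : IsMultiaffineOn g I) {x : ι → ℝ} (hx : x ∈ Set.pi univ I) (i : ι) {w n : Bool → ℝ}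
    (hn : ∀ b, n b ∈ I i) (hw : w true + w false = 1)
    (hwn : w true * n true + w false * n false = x i) :
    ∑ b, w b * g (Function.update x i (n b)) = g x := by
  obtain ⟨c, e, hce⟩ := hg i x hx
  have hxi : g x = c * x i + e := by simpa using hce (x i) (hx i trivial)
  rw [Fintype.sum_bool, hce _ (hn true), hce _ (hn false), hxi, ← hwn]
  linear_combination e * hw

lemma comp_cons {d : ℕ} {g : (Fin (d + 1) → ℝ) → ℝ} {I : Fin (d + 1) → Set ℝ}
    (hg : IsMultiaffineOn g I) {x₀ : ℝ} (hx₀ : x₀ ∈ I 0) :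
    IsMultiaffineOn (fun y => g (Fin.cons x₀ y)) (Fin.tail I) := by
  intro i y hy
  obtain ⟨c, e, hce⟩ := hg i.succ (Fin.cons x₀ y) fun j _ => Fin.cases hx₀ (fun j => hy j trivial) j
  exact ⟨c, e, fun u hu => by simpa only [Fin.cons_update] using hce u hu⟩

theorem sum_prod_mul_eq : ∀ {d : ℕ} {g : (Fin d → ℝ) → ℝ} {I : Fin d → Set ℝ},
    IsMultiaffineOn g I → ∀ {w n : Fin d → Bool → ℝ} {t : Fin d → ℝ}, t ∈ Set.pi univ I →
    (∀ j b, n j b ∈ I j) → (∀ j, w j true + w j false = 1) →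
    (∀ j, w j true * n j true + w j false * n j false = t j) →
    ∑ ε : Fin d → Bool, (∏ j, w j (ε j)) * g (fun j => n j (ε j)) = g t
  | 0, g, _, _, _, _, t, _, _, _, _ => by
    simp [Subsingleton.elim _ t]
  | d + 1, g, I, hg, w, n, t, ht, hn, hw, hwn => by
    have htail : ∀ b, ∑ ε : Fin d → Bool, (∏ j, w j.succ (ε j)) *
        g (Fin.cons (n 0 b) fun j => n j.succ (ε j)) = g (Function.update t 0 (n 0 b)) := by
      intro b
      rw [← Fin.cons_self_tail t, Fin.update_cons_zero]
      exact sum_prod_mul_eq (hg.comp_cons (hn 0 b)) (fun j _ => ht j.succ trivial)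
        (fun j => hn j.succ) (fun j => hw j.succ) (fun j => hwn j.succ)
    have hcons : ∀ b (ε : Fin d → Bool),
        (fun j => n j (Fin.cons b ε j)) = Fin.cons (n 0 b) fun j => n j.succ (ε j) :=
      fun b ε => funext fun j => Fin.cases rfl (fun _ => rfl) j
    rw [← (Fin.consEquiv fun _ => Bool).sum_comp, Fintype.sum_prod_type]
    simp only [Fin.consEquiv_apply, Fin.prod_univ_succ, Fin.cons_zero, Fin.cons_succ, mul_assoc,
      ← Finset.mul_sum, hcons, htail]
    exact hg.sum_bool_mul_update ht 0 (hn 0) (hw 0) (hwn 0)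

end IsMultiaffineOn

theorem stmt19_general (d : ℕ) (F : Fin d → Set ℝ)
    (hFc : ∀ i, IsClosed (F i))
    (h0 : ∀ i, (0:ℝ) ∈ F i) (h1 : ∀ i, (1:ℝ) ∈ F i)
    (S : Fin d → Set ℝ) (hSfin : ∀ i, (S i).Finite) (hSsub : ∀ i, S i ⊆ F i)
    (hS0 : ∀ i, (0:ℝ) ∈ S i) (hS1 : ∀ i, (1:ℝ) ∈ S i)
    (f : (Fin d → ℝ) → ℝ)
    (hcell : ∀ a b : Fin d → ℝ,
      (∀ j, a j ∈ S j) → (∀ j, b j ∈ S j) → (∀ j, a j ≤ b j) →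
      (∀ j, Set.Ioo (a j) (b j) ∩ S j = ∅) →
      ∀ i : Fin d, ∀ t ∈ Set.pi Set.univ (fun j => Set.Icc (a j) (b j)),
        ∃ c e : ℝ, ∀ u ∈ Set.Icc (a i) (b i), f (Function.update t i u) = c * u + e) :
    ∀ t ∈ cube d, multiExt F f t = f t := by
  intro t ht
  have ht0 : ∀ j, 0 ≤ t j := fun j => (ht j trivial).1
  have ht1 : ∀ j, t j ≤ 1 := fun j => (ht j trivial).2
  have hf : IsMultiaffineOn f fun j => Icc (leftN (S j) (t j)) (rightN (S j) (t j)) :=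
    hcell _ _ (fun j => leftN_mem_s19 (hSfin j).isClosed (hS0 j) (ht0 j))
      (fun j => rightN_mem_s19 (hSfin j).isClosed (hS1 j) (ht1 j))
      (fun j => (leftN_le_s19 (hS0 j) (ht0 j)).trans (le_rightN_s19 (hS1 j) (ht1 j)))
      (fun j => Ioo_leftN_rightN_inter_eq_empty _ _)
  exact hf.sum_prod_mul_eq (fun j _ => ⟨leftN_le_s19 (hS0 j) (ht0 j), le_rightN_s19 (hS1 j) (ht1 j)⟩)
    (fun j => nbr_mem_Icc_leftN_rightN (hSsub j) (hS0 j) (ht0 j) (hS1 j) (ht1 j))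
    (fun j => wt_true_add_wt_false _ _)
    (fun j => wt_mul_nbr_add_wt_mul_nbr (hFc j) (h0 j) (ht0 j) (h1 j) (ht1 j))

/-- if `f` is continuous and componentwise piecewise linear with knots in a
finite grid `S = S₁ × ⋯ × S_d` with `S_i ⊆ F_i` (i.e., `f` is `d`-affine on every cell of the
grid), then the multiaffine extension of its restriction to `F` recovers `f` on `[0,1]^d`. -/
theorem stmt19 (d : ℕ) (hd : 1 ≤ d) (F : Fin d → Set ℝ)
    (hFsub : ∀ i, F i ⊆ Set.Icc (0:ℝ) 1) (hFc : ∀ i, IsClosed (F i))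
    (h0 : ∀ i, (0:ℝ) ∈ F i) (h1 : ∀ i, (1:ℝ) ∈ F i)
    (S : Fin d → Set ℝ) (hSfin : ∀ i, (S i).Finite) (hSsub : ∀ i, S i ⊆ F i)
    (hS0 : ∀ i, (0:ℝ) ∈ S i) (hS1 : ∀ i, (1:ℝ) ∈ S i)
    (f : (Fin d → ℝ) → ℝ) (hf : ContinuousOn f (cube d))
    (hcell : ∀ a b : Fin d → ℝ,
      (∀ j, a j ∈ S j) → (∀ j, b j ∈ S j) → (∀ j, a j ≤ b j) →
      (∀ j, Set.Ioo (a j) (b j) ∩ S j = ∅) →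
      ∀ i : Fin d, ∀ t ∈ Set.pi Set.univ (fun j => Set.Icc (a j) (b j)),
        ∃ c e : ℝ, ∀ u ∈ Set.Icc (a i) (b i), f (Function.update t i u) = c * u + e) :
    ∀ t ∈ cube d, multiExt F f t = f t :=
  stmt19_general d F hFc h0 h1 S hSfin hSsub hS0 hS1 f hcell
end
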